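/- arXiv:2211.11660 — 11 statements merged into one kernel-verified Lean document; each statement's English description precedes it below -/
import Mathlib

section
/- Let k be a commutative ring, R an associative k-algebra, and C a k-subalgebra of the center of R such that R is a free C-module of finite rank. If δ is a k-linear derivation of R with δ(C) ⊆ C, then the regular trace commutes with δ: tr_reg(δ(r)) = δ(tr_reg(r)) for all r ∈ R. -/
/-- The regular trace of `R` over a central subalgebra `C`: the trace of the
`C`-linear endomorphism of `R` given by left multiplication. -/
noncomputable def regTrace (C : Type*) {R : Type*} [CommRing C] [Ring R] [Algebra C R]
    (r : R) : C :=
  LinearMap.trace C R (LinearMap.mulLeft C r)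

theorem trace_eq_sum_repr {C R : Type*} [CommRing C] [Ring R] [Module C R]
    {ι : Type*} [Fintype ι] [DecidableEq ι] (b : Module.Basis ι C R) (f : R →ₗ[C] R) :
    LinearMap.trace C R f = ∑ j, b.repr (f (b j)) j := by
  rw [LinearMap.trace_eq_matrix_trace C b f, Matrix.trace]
  simp [Matrix.diag, LinearMap.toMatrix_apply]

/-- If `R` is a free module of finite rank over a central `k`-subalgebra `C` and `δ` is a
`k`-linear derivation of `R` with `δ(C) ⊆ C`, then the regular trace commutes with `δ`. -/
theorem regTrace_comm_derivation {k R C : Type*} [CommRing k]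
    [Ring R] [Algebra k R]
    [CommRing C] [Algebra k C] [Algebra C R] [IsScalarTower k C R]
    (hinj : Function.Injective (algebraMap C R))
    [Module.Free C R] [Module.Finite C R]
    (δ : R →ₗ[k] R) (hδ : ∀ x y : R, δ (x * y) = δ x * y + x * δ y)
    (hδC : ∀ c : C, ∃ c' : C, δ (algebraMap C R c) = algebraMap C R c')
    (r : R) :
    algebraMap C R (regTrace C (δ r)) = δ (algebraMap C R (regTrace C r)) := by
  classical
  choose δ' hδ' using hδC
  set b := Module.Free.chooseBasis C R with hb
  set ι := Module.Free.ChooseBasisIndex C R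
  have key : ∀ (c : C) (x : R), δ (c • x) = δ' c • x + c • δ x := by
    intro c x
    rw [Algebra.smul_def, hδ, hδ' c, ← Algebra.smul_def, ← Algebra.smul_def]
  set M : ι → ι → C := fun i j => b.repr (r * b j) i with hMdef
  set N : ι → ι → C := fun i j => b.repr (δ (b j)) i with hNdef
  have hM : ∀ j, r * b j = ∑ i, M i j • b i := fun j => (b.sum_repr _).symm
  have hN : ∀ j, δ (b j) = ∑ i, N i j • b i := fun j => (b.sum_repr _).symm
  have hδr : ∀ j, δ r * b j =
      ∑ i, δ' (M i j) • b i + ∑ i, ∑ l, (M i j * N l i) • b l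
        - ∑ i, ∑ l, (N i j * M l i) • b l := by
    intro j
    have h1 : δ (r * b j) = δ r * b j + r * δ (b j) := hδ r (b j)
    have h2 : δ (r * b j)
        = ∑ i, δ' (M i j) • b i + ∑ i, ∑ l, (M i j * N l i) • b l := by
      rw [hM j, map_sum, ← Finset.sum_add_distrib]
      refine Finset.sum_congr rfl fun i _ => ?_
      rw [key, hN i, Finset.smul_sum]
      congr 1
      exact Finset.sum_congr rfl fun l _ => (smul_smul _ _ _)
    have h3 : r * δ (b j) = ∑ i, ∑ l, (N i j * M l i) • b l := by
      rw [hN j, Finset.mul_sum]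
      refine Finset.sum_congr rfl fun i _ => ?_
      rw [mul_smul_comm, hM i, Finset.smul_sum]
      exact Finset.sum_congr rfl fun l _ => (smul_smul _ _ _)
    rw [← h2, h1, h3, add_sub_cancel_right]
  have hrepr : ∀ j, b.repr (δ r * b j) j
      = δ' (M j j) + ∑ i, M i j * N j i - ∑ i, N i j * M j i := by
    intro j
    rw [hδr j]
    simp only [map_sub, map_add, map_sum, map_smul, Finsupp.coe_sub, Finsupp.coe_add,
      Finsupp.coe_smul, Pi.sub_apply, Pi.add_apply, Pi.smul_apply,
      Finsupp.coe_finset_sum, Finset.sum_apply, b.repr_self_apply, smul_eq_mul,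
      mul_ite, mul_one, mul_zero, Finset.sum_ite_eq, Finset.sum_ite_eq', Finset.mem_univ, if_true]
  have htrδr : LinearMap.trace C R (LinearMap.mulLeft C (δ r)) = ∑ j, δ' (M j j) := by
    rw [trace_eq_sum_repr b]
    simp only [LinearMap.mulLeft_apply, hrepr]
    rw [Finset.sum_sub_distrib, Finset.sum_add_distrib]
    have : ∑ j, ∑ i, M i j * N j i = ∑ j, ∑ i, N i j * M j i := by
      rw [Finset.sum_comm]
      exact Finset.sum_congr rfl fun j _ => Finset.sum_congr rfl fun i _ => mul_comm _ _
    rw [this]; ring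
  have htrr : LinearMap.trace C R (LinearMap.mulLeft C r) = ∑ j, M j j := by
    rw [trace_eq_sum_repr b]
    simp only [LinearMap.mulLeft_apply]
    rfl
  rw [regTrace, regTrace, htrδr, htrr, map_sum, map_sum, map_sum]
  exact Finset.sum_congr rfl fun j _ => (hδ' (M j j)).symm
end

section
/- Let (R, C, ∂) be a Poisson order over a commutative ring k such that R is a free C-module of finite rank. Then (R, C, ∂, tr_reg) is a Poisson trace order; that is, tr_reg(∂_c(r)) = {c, tr_reg(r)} for all c ∈ C and r ∈ R. -/
/-- A Poisson order `(R, C, ∂)` with `R` a free `C`-module of finite rank is a Poisson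
trace order with respect to the regular trace: `tr_reg(∂_c(r)) = {c, tr_reg(r)}`. -/
theorem poissonOrder_regTrace {k R C : Type*} [CommRing k]
    [Ring R] [Algebra k R]
    [CommRing C] [Algebra k C] [Algebra C R] [IsScalarTower k C R]
    (hinj : Function.Injective (algebraMap C R))
    [Module.Finite C R] [Module.Free C R]
    -- the Poisson bracket on `C`
    (bracket : C →ₗ[k] C →ₗ[k] C)
    (hanti : ∀ a b : C, bracket a b = - bracket b a)
    (hjacobi : ∀ a b c : C,
      bracket a (bracket b c) + bracket b (bracket c a) + bracket c (bracket a b) = 0)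
    (hleibniz : ∀ a b c : C, bracket a (b * c) = bracket a b * c + b * bracket a c)
    -- the map `∂ : C → Der_k(R)`
    (par : C →ₗ[k] R →ₗ[k] R)
    (hder : ∀ (c : C) (x y : R), par c (x * y) = par c x * y + x * par c y)
    (hres : ∀ c a : C, par c (algebraMap C R a) = algebraMap C R (bracket c a))
    (c : C) (r : R) :
    regTrace C (par c r) = bracket c (regTrace C r) := by
  classical
  set b : Module.Basis (Module.Free.ChooseBasisIndex C R) C R := Module.Free.chooseBasis C R with hb
  have hA : ∀ (a : C) (y : R), par c (a • y) = bracket c a • y + a • par c y := by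
    intro a y
    rw [Algebra.smul_def, hder, hres, ← Algebra.smul_def, ← Algebra.smul_def]
  have star : ∀ (x : R) (i),
      b.repr (par c x) i = bracket c (b.repr x i)
        + ∑ l, b.repr x l * b.repr (par c (b l)) i := by
    intro x i
    conv_lhs => rw [← b.sum_repr x]
    rw [map_sum]
    simp only [hA, map_sum, map_add, map_smul, Finset.sum_apply', Finsupp.add_apply,
      Finsupp.smul_apply, Module.Basis.repr_self, Finsupp.single_apply, smul_eq_mul,
      mul_ite, mul_one, mul_zero, Finset.sum_add_distrib, Finset.sum_ite_eq,
      Finset.sum_ite_eq', Finset.mem_univ, if_true]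
  have htr : ∀ s : R, regTrace C s = ∑ i, b.repr (s * b i) i := by
    intro s
    rw [regTrace, LinearMap.trace_eq_matrix_trace C b, Matrix.trace]
    exact Finset.sum_congr rfl fun i _ => by
      simp [Matrix.diag, LinearMap.toMatrix_apply]
  have hcomm : ∀ i, par c r * b i = par c (r * b i) - r * par c (b i) := by
    intro i; rw [hder]; abel
  rw [htr, htr]
  have expand : ∀ i, b.repr (par c r * b i) i =
      (bracket c (b.repr (r * b i) i) + ∑ l, b.repr (r * b i) l * b.repr (par c (b l)) i)
      - ∑ l, b.repr (par c (b i)) l * b.repr (r * b l) i := by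
    intro i
    rw [hcomm i, map_sub, Finsupp.sub_apply, star]
    congr 1
    have h2 : r * par c (b i) = ∑ l, b.repr (par c (b i)) l • (r * b l) := by
      conv_lhs => rw [← b.sum_repr (par c (b i))]
      rw [Finset.mul_sum]
      exact Finset.sum_congr rfl fun l _ => mul_smul_comm _ _ _
    rw [h2, map_sum, Finset.sum_apply']
    exact Finset.sum_congr rfl fun l _ => by simp
  simp only [expand]
  rw [Finset.sum_sub_distrib, Finset.sum_add_distrib, ← map_sum]
  have hcancel : (∑ i, ∑ l, b.repr (r * b i) l * b.repr (par c (b l)) i)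
      = ∑ i, ∑ l, b.repr (par c (b i)) l * b.repr (r * b l) i := by
    rw [Finset.sum_comm]
    exact Finset.sum_congr rfl fun l _ => Finset.sum_congr rfl fun i _ => mul_comm _ _
  rw [hcancel]
  ring
end

section
/- Let k be a commutative ring, R an associative k-algebra, C a k-subalgebra of the center of R, and tr : R → C a trace map. Let δ be a k-linear derivation of R with δ(C) ⊆ C that commutes with tr, i.e. δ(tr(r)) = tr(δ(r)) for all r ∈ R. Then for every positive integer ℓ, the modified ℓ-discriminant ideal is δ-stable: δ( MD_ℓ(R/C, tr) ) ⊆ MD_ℓ(R/C, tr). -/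
/-- Leibniz rule for finite products. -/
lemma aux_d_prod {C : Type*} [CommRing C] (d : C →+ C)
    (hmul : ∀ a b : C, d (a * b) = d a * b + a * d b) {ι : Type*} [DecidableEq ι]
    (s : Finset ι) (f : ι → C) :
    d (∏ i ∈ s, f i) = ∑ j ∈ s, d (f j) * ∏ i ∈ s.erase j, f i := by
  have h1 : d 1 = 0 := by
    have := hmul 1 1
    simp only [mul_one, one_mul] at this
    exact (right_eq_add.mp this)
  induction s using Finset.induction_on with
  | empty => simpa using h1
  | @insert a s ha ih =>
    rw [Finset.prod_insert ha, hmul, ih, Finset.sum_insert ha, Finset.erase_insert ha]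
    congr 1
    rw [Finset.mul_sum]
    refine Finset.sum_congr rfl fun j hj => ?_
    have hja : j ≠ a := fun h => ha (h ▸ hj)
    rw [Finset.erase_insert_of_ne hja.symm,
      Finset.prod_insert (fun h => ha (Finset.mem_of_mem_erase h))]
    ring

/-- A derivation applied to a determinant: sum over columns replaced by their derivative. -/
lemma aux_d_det {C : Type*} [CommRing C] (d : C →+ C)
    (hmul : ∀ a b : C, d (a * b) = d a * b + a * d b)
    {n : Type*} [DecidableEq n] [Fintype n] (M : Matrix n n C) :
    d M.det = ∑ j, (M.updateCol j (fun i => d (M i j))).det := by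
  have hR : ∀ (j : n) (σ : Equiv.Perm n),
      (∏ i, (M.updateCol j (fun p => d (M p j))) (σ i) i)
        = d (M (σ j) j) * ∏ i ∈ Finset.univ.erase j, M (σ i) i := by
    intro j σ
    have hfun : ∀ i, (M.updateCol j (fun p => d (M p j))) (σ i) i
        = Function.update (fun i => M (σ i) i) j (d (M (σ j) j)) i := by
      intro i
      rcases eq_or_ne i j with rfl | h
      · simp [Matrix.updateCol_apply]
      · simp [Matrix.updateCol_apply, h, Function.update_of_ne h]
    calc (∏ i, (M.updateCol j (fun p => d (M p j))) (σ i) i)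
        = ∏ i, Function.update (fun i => M (σ i) i) j (d (M (σ j) j)) i :=
          Finset.prod_congr rfl fun i _ => hfun i
      _ = d (M (σ j) j) * ∏ i ∈ Finset.univ \ {j}, M (σ i) i :=
          Finset.prod_update_of_mem (Finset.mem_univ j) _ _
      _ = d (M (σ j) j) * ∏ i ∈ Finset.univ.erase j, M (σ i) i := by
          rw [Finset.sdiff_singleton_eq_erase]
  rw [Matrix.det_apply, map_sum]
  have key : ∀ σ : Equiv.Perm n,
      d (Equiv.Perm.sign σ • ∏ i, M (σ i) i)
        = ∑ j, Equiv.Perm.sign σ •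
            (d (M (σ j) j) * ∏ i ∈ Finset.univ.erase j, M (σ i) i) := by
    intro σ
    rw [Units.smul_def, AddMonoidHom.map_zsmul, aux_d_prod d hmul, Finset.smul_sum]
    simp [Units.smul_def]
  calc (∑ σ : Equiv.Perm n, d (Equiv.Perm.sign σ • ∏ i, M (σ i) i))
      = ∑ σ : Equiv.Perm n, ∑ j, Equiv.Perm.sign σ •
          (d (M (σ j) j) * ∏ i ∈ Finset.univ.erase j, M (σ i) i) :=
        Finset.sum_congr rfl fun σ _ => key σ
    _ = ∑ j, ∑ σ : Equiv.Perm n, Equiv.Perm.sign σ •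
          (d (M (σ j) j) * ∏ i ∈ Finset.univ.erase j, M (σ i) i) := Finset.sum_comm
    _ = ∑ j, (M.updateCol j (fun i => d (M i j))).det := by
        refine Finset.sum_congr rfl fun j _ => ?_
        rw [Matrix.det_apply]
        exact Finset.sum_congr rfl fun σ _ => by rw [hR j σ]

/-- Sum of determinants with a row replaced equals sum with columns replaced. -/
lemma aux_row_col {C : Type*} [CommRing C] {n : Type*} [DecidableEq n] [Fintype n]
    (M N : Matrix n n C) :
    ∑ i, (M.updateRow i (N i)).det = ∑ j, (M.updateCol j (fun i => N i j)).det := by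
  have hrow : ∀ i, (M.updateRow i (N i)).det = ∑ j, M.adjugate j i * N i j := by
    intro i
    have : M.updateRow i (N i)
        = Matrix.transpose (Matrix.updateCol (Matrix.transpose M) i (N i)) := by
      rw [← Matrix.updateRow_transpose, Matrix.transpose_transpose]
    rw [this, Matrix.det_transpose, ← Matrix.cramer_apply,
      Matrix.cramer_eq_adjugate_mulVec]
    simp [Matrix.mulVec, dotProduct, ← Matrix.adjugate_transpose]
  have hcol : ∀ j, (M.updateCol j (fun i => N i j)).det
      = ∑ i, M.adjugate j i * N i j := by
    intro j
    rw [← Matrix.cramer_apply, Matrix.cramer_eq_adjugate_mulVec]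
    simp [Matrix.mulVec, dotProduct]
  rw [Finset.sum_congr rfl fun i _ => hrow i, Finset.sum_congr rfl fun j _ => hcol j,
    Finset.sum_comm]

/-- The modified `ℓ`-discriminant ideal `MD_ℓ(R/C, tr)`: the ideal of `C` generated by the
elements `det((tr(rᵢ sⱼ))ᵢⱼ)` over all `ℓ`-tuples `(r₁,…,r_ℓ)`, `(s₁,…,s_ℓ)` in `R`. -/
def modifiedDiscriminantIdeal {C R : Type*} [CommRing C] [Ring R] [Algebra C R]
    (tr : R →ₗ[C] C) (ℓ : ℕ) : Ideal C :=
  Ideal.span { x : C | ∃ r s : Fin ℓ → R,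
    x = Matrix.det (Matrix.of fun i j => tr (r i * s j)) }

/-- If a `k`-linear derivation `δ` of `R` preserves the central subalgebra `C`
(restricting there to `δ₀`) and commutes with a trace map `tr : R → C`, then the modified
`ℓ`-discriminant ideal is `δ`-stable. -/
theorem modifiedDiscriminantIdeal_derivation_stable {k R C : Type*} [CommRing k]
    [Ring R] [Algebra k R]
    [CommRing C] [Algebra k C] [Algebra C R] [IsScalarTower k C R]
    (hinj : Function.Injective (algebraMap C R))
    -- the trace map
    (tr : R →ₗ[C] C) (hcyc : ∀ x y : R, tr (x * y) = tr (y * x))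
    -- the derivation of `R`, preserving `C`, where it restricts to `δ₀`
    (δ : R →ₗ[k] R) (hδ : ∀ x y : R, δ (x * y) = δ x * y + x * δ y)
    (δ₀ : C →ₗ[k] C) (hδ₀ : ∀ a b : C, δ₀ (a * b) = δ₀ a * b + a * δ₀ b)
    (hcompat : ∀ c : C, δ (algebraMap C R c) = algebraMap C R (δ₀ c))
    -- `δ` commutes with `tr`
    (hcomm : ∀ r : R, δ₀ (tr r) = tr (δ r))
    (ℓ : ℕ) (hℓ : 0 < ℓ) :
    ∀ x ∈ modifiedDiscriminantIdeal tr ℓ, δ₀ x ∈ modifiedDiscriminantIdeal tr ℓ := by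
  unfold modifiedDiscriminantIdeal
  set I := modifiedDiscriminantIdeal tr ℓ with hI
  set d : C →+ C := δ₀.toAddMonoidHom with hd
  -- main claim: δ₀ of a generator lies in I
  have hgen : ∀ r s : Fin ℓ → R,
      δ₀ (Matrix.det (Matrix.of fun i j => tr (r i * s j))) ∈ I := by
    intro r s
    set M : Matrix (Fin ℓ) (Fin ℓ) C := Matrix.of fun i j => tr (r i * s j) with hM
    have hdd : δ₀ M.det = ∑ j, (M.updateCol j (fun i => δ₀ (M i j))).det :=
      aux_d_det d hδ₀ M
    have hsplit : ∀ j, (M.updateCol j (fun i => δ₀ (M i j))).det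
        = (M.updateCol j (fun i => tr (δ (r i) * s j))).det
          + (M.updateCol j (fun i => tr (r i * δ (s j)))).det := by
      intro j
      have hcoleq : (fun i => δ₀ (M i j))
          = (fun i : Fin ℓ => tr (δ (r i) * s j)) + (fun i : Fin ℓ => tr (r i * δ (s j))) := by
        funext i
        show δ₀ (tr (r i * s j)) = _
        rw [hcomm, hδ, map_add]
        rfl
      rw [hcoleq, Matrix.det_updateCol_add]
    -- second pieces are generators
    have hmem2 : ∀ j, (M.updateCol j (fun i => tr (r i * δ (s j)))).det ∈ I := by
      intro j
      apply Ideal.subset_span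
      refine ⟨r, Function.update s j (δ (s j)), ?_⟩
      congr 1
      ext i j'
      rcases eq_or_ne j' j with rfl | h
      · simp [Matrix.updateCol_apply]
      · simp [Matrix.updateCol_apply, h, Function.update_of_ne h, hM]
    -- first pieces: convert column sum to row sum
    have hrowmem : ∀ i, (M.updateRow i (fun j => tr (δ (r i) * s j))).det ∈ I := by
      intro i
      apply Ideal.subset_span
      refine ⟨Function.update r i (δ (r i)), s, ?_⟩
      congr 1
      ext i' j
      rcases eq_or_ne i' i with rfl | h
      · simp [Matrix.updateRow_apply]
      · simp [Matrix.updateRow_apply, h, Function.update_of_ne h, hM]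
    have hswap : (∑ j, (M.updateCol j (fun i => tr (δ (r i) * s j))).det)
        = ∑ i, (M.updateRow i (fun j => tr (δ (r i) * s j))).det := by
      exact (aux_row_col M (Matrix.of fun i j => tr (δ (r i) * s j))).symm
    rw [hdd]
    have : (∑ j, (M.updateCol j (fun i => δ₀ (M i j))).det)
        = (∑ j, (M.updateCol j (fun i => tr (δ (r i) * s j))).det)
          + ∑ j, (M.updateCol j (fun i => tr (r i * δ (s j)))).det := by
      rw [← Finset.sum_add_distrib]
      exact Finset.sum_congr rfl fun j _ => hsplit j
    rw [this, hswap]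
    exact add_mem (Ideal.sum_mem I fun i _ => hrowmem i) (Ideal.sum_mem I fun j _ => hmem2 j)
  intro x hx
  have main : x ∈ I ∧ δ₀ x ∈ I := by
    refine Submodule.span_induction ?_ ?_ ?_ ?_ hx
    · rintro y ⟨r, s, rfl⟩
      exact ⟨Ideal.subset_span ⟨r, s, rfl⟩, hgen r s⟩
    · simp
    · rintro a b _ _ ⟨ha, ha'⟩ ⟨hb, hb'⟩
      exact ⟨add_mem ha hb, by rw [map_add]; exact add_mem ha' hb'⟩
    · rintro c y _ ⟨hy, hy'⟩
      refine ⟨Ideal.mul_mem_left I c hy, ?_⟩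
      have : δ₀ (c * y) = δ₀ c * y + c * δ₀ y := hδ₀ c y
      rw [smul_eq_mul, this]
      exact add_mem (Ideal.mul_mem_left I _ hy) (Ideal.mul_mem_left I c hy')
  exact main.2
end

section
/- Let (R, C, ∂, tr) be a Poisson trace order over a field k such that C is a finitely generated k-algebra, and let ℓ be a positive integer. If m and n are maximal ideals of C lying in the same symplectic core, i.e. P(m) = P(n), then MD_ℓ(R/C, tr) ⊆ m if and only if MD_ℓ(R/C, tr) ⊆ n. In other words, the zero locus of the modified ℓ-discriminant ideal is a union of symplectic cores of MaxSpec C. -/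
/-- `P(I)`: the largest Poisson ideal of `C` contained in the ideal `I`, i.e. the sum of
all Poisson ideals contained in `I`. -/
def poissonCore {k C : Type*} [CommRing k] [CommRing C] [Algebra k C]
    (bracket : C →ₗ[k] C →ₗ[k] C) (I : Ideal C) : Ideal C :=
  sSup { J : Ideal C | (∀ c : C, ∀ x ∈ J, bracket c x ∈ J) ∧ J ≤ I }

open Matrix Finset

namespace Derivation

variable {R A M : Type*} [CommSemiring R] [CommSemiring A] [Algebra R A]
  [AddCommMonoid M] [Module A M] [Module R M]

theorem leibniz_finset_prod {ι : Type*} [DecidableEq ι] (D : Derivation R A M) (s : Finset ι)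
    (f : ι → A) : D (∏ i ∈ s, f i) = ∑ i ∈ s, (∏ j ∈ s.erase i, f j) • D (f i) := by
  induction s using Finset.induction_on with
  | empty => simp
  | insert a s ha ih =>
    rw [prod_insert ha, leibniz, ih, sum_insert ha, erase_insert ha, smul_sum, add_comm]
    congr 1
    refine sum_congr rfl fun i hi => ?_
    rw [erase_insert_of_ne (ne_of_mem_of_not_mem hi ha).symm, prod_insert (by simp [ha]),
      mul_smul]

end Derivation

theorem Derivation.map_det {k C ι : Type*} [CommSemiring k] [CommRing C] [Algebra k C]
    [Fintype ι] [DecidableEq ι] (D : Derivation k C C) (M : Matrix ι ι C) :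
    D M.det = ∑ j, (M.updateCol j fun i => D (M i j)).det := by
  simp only [det_apply, Units.smul_def, map_sum, map_zsmul, leibniz_finset_prod, smul_sum]
  rw [sum_comm]
  refine sum_congr rfl fun j _ => sum_congr rfl fun σ _ => ?_
  rw [← mul_prod_erase univ _ (mem_univ j), updateCol_self, smul_eq_mul, mul_comm]
  congr 2
  exact prod_congr rfl fun q hq => (updateCol_ne (ne_of_mem_erase hq)).symm

theorem Derivation.map_mem_ideal_span {k C : Type*} [CommSemiring k] [CommRing C] [Algebra k C]
    (D : Derivation k C C) {S : Set C} (hS : ∀ s ∈ S, D s ∈ Ideal.span S) {x : C}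
    (hx : x ∈ Ideal.span S) : D x ∈ Ideal.span S := by
  induction hx using Submodule.span_induction with
  | mem y hy => exact hS y hy
  | zero => simp
  | add y z _ _ hy hz => simpa using add_mem hy hz
  | smul a y hy hDy =>
    rw [smul_eq_mul, D.leibniz, smul_eq_mul, smul_eq_mul]
    exact add_mem (Ideal.mul_mem_left _ a hDy) (Ideal.mul_mem_right _ _ hy)

theorem Matrix.sum_det_updateRow_eq_sum_det_updateCol {C ι : Type*} [CommRing C] [Fintype ι]
    [DecidableEq ι] (M : Matrix ι ι C) (b : ι → ι → C) :
    ∑ i, (M.updateRow i (b i)).det = ∑ j, (M.updateCol j fun i => b i j).det := by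
  have hrow : ∀ i, (M.updateRow i (b i)).det = ∑ j, M.adjugate j i * b i j := fun i => by
    rw [← cramer_transpose_apply, cramer_eq_adjugate_mulVec, ← adjugate_transpose]
    rfl
  have hcol : ∀ j, (M.updateCol j fun i => b i j).det = ∑ i, M.adjugate j i * b i j := fun j => by
    rw [← cramer_apply, cramer_eq_adjugate_mulVec]
    rfl
  simp only [hrow, hcol]
  exact sum_comm

section TraceForm

variable {C R ι : Type*} [CommRing C] [Ring R] [Algebra C R] [DecidableEq ι] (tr : R →ₗ[C] C)

theorem updateRow_traceForm (r s : ι → R) (i : ι) (x : R) :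
    (Matrix.of fun p q => tr (r p * s q)).updateRow i (fun q => tr (x * s q)) =
      Matrix.of fun p q => tr (Function.update r i x p * s q) := by
  ext p q
  rcases eq_or_ne p i with rfl | hp <;> simp [*]

theorem updateCol_traceForm (r s : ι → R) (j : ι) (x : R) :
    (Matrix.of fun p q => tr (r p * s q)).updateCol j (fun p => tr (r p * x)) =
      Matrix.of fun p q => tr (r p * Function.update s j x q) := by
  ext p q
  rcases eq_or_ne q j with rfl | hq <;> simp [*]

variable [Fintype ι]

def traceFormDet (r s : ι → R) : C :=
  (Matrix.of fun i j => tr (r i * s j)).det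

theorem Derivation.map_traceFormDet {k : Type*} [CommSemiring k] [Algebra k C]
    (D : Derivation k C C) (δ : R → R) (hδ : ∀ x y, δ (x * y) = δ x * y + x * δ y)
    (htr : ∀ x, tr (δ x) = D (tr x)) (r s : ι → R) :
    D (traceFormDet tr r s) = ∑ i, traceFormDet tr (Function.update r i (δ (r i))) s +
      ∑ j, traceFormDet tr r (Function.update s j (δ (s j))) := by
  have hentry : ∀ i j, D (tr (r i * s j)) = tr (δ (r i) * s j) + tr (r i * δ (s j)) := by
    intro i j
    rw [← htr, hδ, map_add]
  set M : Matrix ι ι C := Matrix.of fun i j => tr (r i * s j)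
  have hcol : ∀ j, (M.updateCol j fun i => D (M i j)).det =
      (M.updateCol j fun i => tr (δ (r i) * s j)).det +
        (M.updateCol j fun i => tr (r i * δ (s j))).det := fun j => by
    simp only [M, of_apply, hentry]
    exact det_updateCol_add _ _ _ _
  rw [traceFormDet, D.map_det, sum_congr rfl fun j _ => hcol j, sum_add_distrib,
    ← sum_det_updateRow_eq_sum_det_updateCol M fun i j => tr (δ (r i) * s j)]
  simp only [M, updateRow_traceForm, updateCol_traceForm, traceFormDet]

end TraceForm

theorem map_mem_modifiedDiscriminantIdeal {k C R : Type*} [CommSemiring k] [CommRing C]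
    [Algebra k C] [Ring R] [Algebra C R] (tr : R →ₗ[C] C) (D : Derivation k C C) (δ : R → R)
    (hδ : ∀ x y, δ (x * y) = δ x * y + x * δ y) (htr : ∀ x, tr (δ x) = D (tr x)) (ℓ : ℕ)
    {x : C} (hx : x ∈ modifiedDiscriminantIdeal tr ℓ) : D x ∈ modifiedDiscriminantIdeal tr ℓ := by
  refine D.map_mem_ideal_span ?_ hx
  rintro _ ⟨r, s, rfl⟩
  rw [← traceFormDet, D.map_traceFormDet tr δ hδ htr]
  exact add_mem (sum_mem fun i _ => Ideal.subset_span ⟨_, _, rfl⟩)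
    (sum_mem fun j _ => Ideal.subset_span ⟨_, _, rfl⟩)

section Poisson

variable {k C : Type*} [CommRing k] [CommRing C] [Algebra k C] (bracket : C →ₗ[k] C →ₗ[k] C)

def IsPoissonIdeal (J : Ideal C) : Prop :=
  ∀ c, ∀ x ∈ J, bracket c x ∈ J

theorem poissonCore_le (I : Ideal C) : poissonCore bracket I ≤ I :=
  sSup_le fun _ hJ => hJ.2

variable {bracket} in
theorem IsPoissonIdeal.le_poissonCore_iff {J I : Ideal C}
    (hJ : IsPoissonIdeal bracket J) : J ≤ poissonCore bracket I ↔ J ≤ I :=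
  ⟨fun h => h.trans (poissonCore_le bracket I), fun h => le_sSup ⟨hJ, h⟩⟩

theorem isPoissonIdeal_modifiedDiscriminantIdeal {R : Type*} [Ring R] [Algebra C R]
    (hleibniz : ∀ a b c : C, bracket a (b * c) = bracket a b * c + b * bracket a c)
    (δ : C → R → R) (hδ : ∀ (c : C) (x y : R), δ c (x * y) = δ c x * y + x * δ c y)
    (tr : R →ₗ[C] C) (htr : ∀ (c : C) (r : R), tr (δ c r) = bracket c (tr r)) (ℓ : ℕ) :
    IsPoissonIdeal bracket (modifiedDiscriminantIdeal tr ℓ) := fun c _ hx =>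
  map_mem_modifiedDiscriminantIdeal tr
    (Derivation.mk' (bracket c) fun a b => by
      rw [hleibniz, smul_eq_mul, smul_eq_mul, add_comm, mul_comm b])
    (δ c) (hδ c) (htr c) ℓ hx

end Poisson

theorem modifiedDiscriminantIdeal_zeroLocus_union_symplecticCores_general
    {k R C : Type*} [Field k]
    [Ring R] [Algebra k R]
    [CommRing C] [Algebra k C] [Algebra C R]
    -- the Poisson bracket on `C`
    (bracket : C →ₗ[k] C →ₗ[k] C)
    (hleibniz : ∀ a b c : C, bracket a (b * c) = bracket a b * c + b * bracket a c)
    -- the map `∂ : C → Der_k(R)`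
    (par : C →ₗ[k] R →ₗ[k] R)
    (hder : ∀ (c : C) (x y : R), par c (x * y) = par c x * y + x * par c y)
    -- the trace map, compatible with `∂`
    (tr : R →ₗ[C] C)
    (hcompat : ∀ (c : C) (r : R), tr (par c r) = bracket c (tr r))
    (ℓ : ℕ)
    (m n : Ideal C)
    (hcore : poissonCore bracket m = poissonCore bracket n) :
    modifiedDiscriminantIdeal tr ℓ ≤ m ↔ modifiedDiscriminantIdeal tr ℓ ≤ n := by
  have hMD := isPoissonIdeal_modifiedDiscriminantIdeal bracket hleibniz (fun c x => par c x)
    hder tr hcompat ℓ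
  rw [← hMD.le_poissonCore_iff, hcore, hMD.le_poissonCore_iff]

/-- For a Poisson trace order `(R, C, ∂, tr)` over a field `k` with `C` a finitely
generated `k`-algebra, the zero locus of the modified `ℓ`-discriminant ideal is a union
of symplectic cores: if maximal ideals `m, n` of `C` satisfy `P(m) = P(n)`, then
`MD_ℓ(R/C,tr) ⊆ m ↔ MD_ℓ(R/C,tr) ⊆ n`. -/
theorem modifiedDiscriminantIdeal_zeroLocus_union_symplecticCores
    {k R C : Type*} [Field k]
    [Ring R] [Algebra k R]
    [CommRing C] [Algebra k C] [Algebra C R] [IsScalarTower k C R]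
    (hinj : Function.Injective (algebraMap C R))
    [Module.Finite C R] [Algebra.FiniteType k C]
    -- the Poisson bracket on `C`
    (bracket : C →ₗ[k] C →ₗ[k] C)
    (hanti : ∀ a b : C, bracket a b = - bracket b a)
    (hjacobi : ∀ a b c : C,
      bracket a (bracket b c) + bracket b (bracket c a) + bracket c (bracket a b) = 0)
    (hleibniz : ∀ a b c : C, bracket a (b * c) = bracket a b * c + b * bracket a c)
    -- the map `∂ : C → Der_k(R)`
    (par : C →ₗ[k] R →ₗ[k] R)
    (hder : ∀ (c : C) (x y : R), par c (x * y) = par c x * y + x * par c y)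
    (hres : ∀ c a : C, par c (algebraMap C R a) = algebraMap C R (bracket c a))
    -- the trace map, compatible with `∂`
    (tr : R →ₗ[C] C) (hcyc : ∀ x y : R, tr (x * y) = tr (y * x))
    (hcompat : ∀ (c : C) (r : R), tr (par c r) = bracket c (tr r))
    (ℓ : ℕ) (hℓ : 0 < ℓ)
    (m n : Ideal C) (hm : m.IsMaximal) (hn : n.IsMaximal)
    (hcore : poissonCore bracket m = poissonCore bracket n) :
    modifiedDiscriminantIdeal tr ℓ ≤ m ↔ modifiedDiscriminantIdeal tr ℓ ≤ n :=
  modifiedDiscriminantIdeal_zeroLocus_union_symplecticCores_general bracket hleibniz par hder tr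
    hcompat ℓ m n hcore
end

section
/- Let k be a commutative ring and let K ⊆ L be fields that are k-algebras, with L a finite-dimensional K-vector space. If δ is a k-linear derivation of L with δ(K) ⊆ K, then the field trace commutes with δ: Tr_{L/K}(δ(x)) = δ(Tr_{L/K}(x)) for all x ∈ L. -/
/-!
In the coordinates of a basis `b` of `L` over `K`, `δ` acts as the restriction `δK` of `δ` to `K`
on each coordinate plus the matrix `Δ` of `δ` on the basis vectors. Hence, if `M` is the matrix of
multiplication by `x`, the matrix of multiplication by `δ x` is `M.map δK + Δ * M - M * Δ`, and
taking traces kills the commutator.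
-/

open Module Matrix

namespace Module.Basis

variable {K L ι F : Type*} [CommRing K] [CommRing L] [Algebra K L] [Fintype ι]
  (b : Basis ι K L) [FunLike F L L] [AddMonoidHomClass F L L] {δ : F} {δK : K → K}

theorem repr_map_derivation (hδ : ∀ x y, δ (x * y) = δ x * y + x * δ y)
    (hδK : ∀ a, δ (algebraMap K L a) = algebraMap K L (δK a)) (y : L) (i : ι) :
    b.repr (δ y) i = δK (b.repr y i) + (b.toMatrix (δ ∘ b) *ᵥ b.repr y) i := by
  have hδy : δ y = ∑ j, (δK (b.repr y j) • b j + b.repr y j • δ (b j)) := by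
    conv_lhs => rw [← b.sum_repr y]
    simp only [map_sum, Algebra.smul_def, hδ, hδK]
  classical
  simp [hδy, Finsupp.single_apply, mulVec, dotProduct, toMatrix_apply, mul_comm,
    Finset.sum_add_distrib]

theorem leftMulMatrix_map_derivation [DecidableEq ι]
    (hδ : ∀ x y, δ (x * y) = δ x * y + x * δ y)
    (hδK : ∀ a, δ (algebraMap K L a) = algebraMap K L (δK a)) (x : L) :
    Algebra.leftMulMatrix b (δ x) = (Algebra.leftMulMatrix b x).map δK +
      b.toMatrix (δ ∘ b) * Algebra.leftMulMatrix b x -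
      Algebra.leftMulMatrix b x * b.toMatrix (δ ∘ b) := by
  ext i j
  have hleibniz : δ x * b j = δ (x * b j) - x * δ (b j) := by rw [hδ]; ring
  have hcol : ⇑(b.repr (x * b j)) = fun l ↦ Algebra.leftMulMatrix b x l j := by
    ext l; rw [Algebra.leftMulMatrix_eq_repr_mul]
  rw [Algebra.leftMulMatrix_eq_repr_mul, hleibniz, map_sub, Finsupp.sub_apply,
    b.repr_map_derivation hδ hδK, hcol, ← Algebra.leftMulMatrix_mulVec_repr]
  simp [mulVec, dotProduct, Matrix.mul_apply, toMatrix_apply]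

theorem trace_map_derivation [DecidableEq ι] (hδ : ∀ x y, δ (x * y) = δ x * y + x * δ y)
    (hδK : ∀ a, δ (algebraMap K L a) = algebraMap K L (δK a)) (x : L) :
    Algebra.trace K L (δ x) = ∑ i, δK (Algebra.leftMulMatrix b x i i) := by
  rw [Algebra.trace_eq_matrix_trace b, b.leftMulMatrix_map_derivation hδ hδK, trace_sub,
    trace_add, trace_mul_comm, add_sub_cancel_right]
  rfl

end Module.Basis

theorem Algebra.algebraMap_trace_map_derivation {K L F : Type*} [CommRing K] [CommRing L]
    [Algebra K L] [Module.Free K L] [Module.Finite K L] [FunLike F L L] [AddMonoidHomClass F L L]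
    {δ : F} {δK : K → K} (hδ : ∀ x y, δ (x * y) = δ x * y + x * δ y)
    (hδK : ∀ a, δ (algebraMap K L a) = algebraMap K L (δK a)) (x : L) :
    algebraMap K L (trace K L (δ x)) = δ (algebraMap K L (trace K L x)) := by
  classical
  let b := Module.Free.chooseBasis K L
  rw [b.trace_map_derivation hδ hδK, trace_eq_matrix_trace b, Matrix.trace, map_sum, map_sum,
    map_sum]
  simp only [diag_apply, hδK]

theorem fieldTrace_comm_derivation_general {k K L : Type*} [CommRing k]
    [Field K] [Field L] [Algebra k L]
    [Algebra K L] [FiniteDimensional K L]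
    (δ : L →ₗ[k] L) (hδ : ∀ x y : L, δ (x * y) = δ x * y + x * δ y)
    (hδK : ∀ a : K, ∃ b : K, δ (algebraMap K L a) = algebraMap K L b)
    (x : L) :
    algebraMap K L (Algebra.trace K L (δ x)) = δ (algebraMap K L (Algebra.trace K L x)) := by
  choose δK hδK using hδK
  exact Algebra.algebraMap_trace_map_derivation hδ hδK x

/-- If `K ⊆ L` are fields that are `k`-algebras with `L/K` finite, and `δ` is a `k`-linear
derivation of `L` with `δ(K) ⊆ K`, then the field trace `Tr_{L/K}` commutes with `δ`. -/
theorem fieldTrace_comm_derivation {k K L : Type*} [CommRing k]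
    [Field K] [Field L] [Algebra k K] [Algebra k L]
    [Algebra K L] [IsScalarTower k K L] [FiniteDimensional K L]
    (δ : L →ₗ[k] L) (hδ : ∀ x y : L, δ (x * y) = δ x * y + x * δ y)
    (hδK : ∀ a : K, ∃ b : K, δ (algebraMap K L a) = algebraMap K L b)
    (x : L) :
    algebraMap K L (Algebra.trace K L (δ x)) = δ (algebraMap K L (Algebra.trace K L x)) :=
  fieldTrace_comm_derivation_general δ hδ hδK x
end

section
/- Let k be a commutative ring, let A ⊆ C be commutative integral domains that are k-algebras, with C a finitely generated A-module and A integrally closed in its fraction field. Let δ be a k-linear derivation of C with δ(A) ⊆ A. Then tr_{C/A}(δ(c)) = δ(tr_{C/A}(c)) for all c ∈ C. -/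
/-- Let `A ⊆ C` be integral domains (`k`-algebras) with `C` a finitely generated
`A`-module and `A` integrally closed in its fraction field `K`. Let `L` be the fraction
field of `C`, and let `t = tr_{C/A} : C → A` be the restriction of the field trace
`Tr_{L/K}`. If `δ` is a `k`-linear derivation of `C` with `δ(A) ⊆ A`, then
`tr_{C/A}(δ(c)) = δ(tr_{C/A}(c))` for all `c ∈ C`. -/
theorem traceCA_comm_derivation {k A C K L : Type*} [CommRing k]
    [CommRing A] [IsDomain A] [Algebra k A]
    [CommRing C] [IsDomain C] [Algebra k C]
    [Algebra A C] [IsScalarTower k A C]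
    (hinj : Function.Injective (algebraMap A C))
    [Module.Finite A C] [IsIntegrallyClosed A]
    [Field K] [Algebra A K] [IsFractionRing A K]
    [Field L] [Algebra C L] [IsFractionRing C L]
    [Algebra A L] [Algebra K L] [IsScalarTower A C L] [IsScalarTower A K L]
    [FiniteDimensional K L]
    (δ : C →ₗ[k] C) (hδ : ∀ x y : C, δ (x * y) = δ x * y + x * δ y)
    (hδA : ∀ a : A, ∃ b : A, δ (algebraMap A C a) = algebraMap A C b)
    -- `t = tr_{C/A}` is the restriction to `C` of the field trace `Tr_{L/K}`
    (t : C → A)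
    (ht : ∀ c : C, algebraMap A K (t c) = Algebra.trace K L (algebraMap C L c))
    (c : C) :
    algebraMap A C (t (δ c)) = δ (algebraMap A C (t c)) := by
  classical
  set φ := algebraMap C L with hφdef
  set ψ := algebraMap K L with hψdef
  have hφ : Function.Injective φ := IsFractionRing.injective C L
  have hψ : Function.Injective ψ := (algebraMap K L).injective
  have hα : Function.Injective (algebraMap A K) := IsFractionRing.injective A K
  have hδ1 : δ 1 = 0 := by
    have h : δ (1 * 1) = δ 1 * 1 + 1 * δ 1 := hδ 1 1
    simp only [one_mul, mul_one] at h
    exact (right_eq_add.mp h)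
  -- Extend δ to D : L → L
  let D : L → L := fun l =>
    (φ (δ (IsLocalization.sec (nonZeroDivisors C) l).1)
      - l * φ (δ ((IsLocalization.sec (nonZeroDivisors C) l).2 : C))) /
      φ ((IsLocalization.sec (nonZeroDivisors C) l).2 : C)
  have hsnd : ∀ l : L, φ ((IsLocalization.sec (nonZeroDivisors C) l).2 : C) ≠ 0 := fun l =>
    IsFractionRing.to_map_ne_zero_of_mem_nonZeroDivisors
      (IsLocalization.sec (nonZeroDivisors C) l).2.2
  have hsec : ∀ l : L, l * φ ((IsLocalization.sec (nonZeroDivisors C) l).2 : C)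
      = φ (IsLocalization.sec (nonZeroDivisors C) l).1 := fun l =>
    IsLocalization.sec_spec (nonZeroDivisors C) l
  -- characterization of D
  have hD : ∀ (l : L) (c₁ c₂ : C), φ c₂ ≠ 0 → l * φ c₂ = φ c₁ →
      D l * φ c₂ = φ (δ c₁) - l * φ (δ c₂) := by
    intro l c₁ c₂ h2 hl
    have h1 := hsec l
    have hs2 := hsnd l
    set s₁ := (IsLocalization.sec (nonZeroDivisors C) l).1 with hs₁def
    set s₂ := ((IsLocalization.sec (nonZeroDivisors C) l).2 : C) with hs₂def
    have hcc : s₁ * c₂ = c₁ * s₂ := by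
      apply hφ
      rw [map_mul, map_mul, ← h1, ← hl]; ring
    have hδcc : φ (δ s₁) * φ c₂ + φ s₁ * φ (δ c₂)
        = φ (δ c₁) * φ s₂ + φ c₁ * φ (δ s₂) := by
      have h := congrArg (fun z => φ (δ z)) hcc
      simp only [hδ, map_add, map_mul] at h
      exact h
    show (φ (δ s₁) - l * φ (δ s₂)) / φ s₂ * φ c₂ = φ (δ c₁) - l * φ (δ c₂)
    rw [div_mul_eq_mul_div, div_eq_iff hs2]
    linear_combination hδcc + φ (δ c₂) * h1 - φ (δ s₂) * hl
  have hDφ : ∀ x : C, D (φ x) = φ (δ x) := by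
    intro x
    have h := hD (φ x) x 1 (by simp) (by simp)
    simpa [hδ1] using h
  have hDadd : ∀ l₁ l₂ : L, D (l₁ + l₂) = D l₁ + D l₂ := by
    intro l₁ l₂
    set c₁ := (IsLocalization.sec (nonZeroDivisors C) l₁).1
    set a₁ := ((IsLocalization.sec (nonZeroDivisors C) l₁).2 : C)
    set c₂ := (IsLocalization.sec (nonZeroDivisors C) l₂).1
    set a₂ := ((IsLocalization.sec (nonZeroDivisors C) l₂).2 : C)
    have h1 : l₁ * φ a₁ = φ c₁ := hsec l₁
    have h2 : l₂ * φ a₂ = φ c₂ := hsec l₂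
    have ha₁ : φ a₁ ≠ 0 := hsnd l₁
    have ha₂ : φ a₂ ≠ 0 := hsnd l₂
    have hrep : (l₁ + l₂) * φ (a₁ * a₂) = φ (c₁ * a₂ + c₂ * a₁) := by
      rw [map_mul, map_add, map_mul, map_mul, ← h1, ← h2]; ring
    have u := hD (l₁ + l₂) (c₁ * a₂ + c₂ * a₁) (a₁ * a₂)
      (by rw [map_mul]; exact mul_ne_zero ha₁ ha₂) hrep
    have u1 := hD l₁ c₁ a₁ ha₁ h1
    have u2 := hD l₂ c₂ a₂ ha₂ h2
    simp only [map_add, hδ, map_mul] at u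
    apply mul_right_cancel₀ (mul_ne_zero ha₁ ha₂)
    linear_combination u - φ a₂ * u1 - φ a₁ * u2 - φ (δ a₂) * h1 - φ (δ a₁) * h2
  have hDmul : ∀ l₁ l₂ : L, D (l₁ * l₂) = D l₁ * l₂ + l₁ * D l₂ := by
    intro l₁ l₂
    set c₁ := (IsLocalization.sec (nonZeroDivisors C) l₁).1
    set a₁ := ((IsLocalization.sec (nonZeroDivisors C) l₁).2 : C)
    set c₂ := (IsLocalization.sec (nonZeroDivisors C) l₂).1
    set a₂ := ((IsLocalization.sec (nonZeroDivisors C) l₂).2 : C)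
    have h1 : l₁ * φ a₁ = φ c₁ := hsec l₁
    have h2 : l₂ * φ a₂ = φ c₂ := hsec l₂
    have ha₁ : φ a₁ ≠ 0 := hsnd l₁
    have ha₂ : φ a₂ ≠ 0 := hsnd l₂
    have hrep : (l₁ * l₂) * φ (a₁ * a₂) = φ (c₁ * c₂) := by
      rw [map_mul, map_mul, ← h1, ← h2]; ring
    have u := hD (l₁ * l₂) (c₁ * c₂) (a₁ * a₂)
      (by rw [map_mul]; exact mul_ne_zero ha₁ ha₂) hrep
    have u1 := hD l₁ c₁ a₁ ha₁ h1
    have u2 := hD l₂ c₂ a₂ ha₂ h2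
    simp only [hδ, map_add, map_mul] at u
    apply mul_right_cancel₀ (mul_ne_zero ha₁ ha₂)
    linear_combination u - l₂ * φ a₂ * u1 - l₁ * φ a₁ * u2 - φ (δ c₂) * h1 - φ (δ c₁) * h2
  have hD0 : D 0 = 0 := by
    have h := hD 0 0 1 (by simp) (by simp)
    simpa using h
  -- D as additive hom
  let Dh : L →+ L := AddMonoidHom.mk' D hDadd
  -- D preserves K
  have hcomm : ∀ a : A, φ (algebraMap A C a) = ψ (algebraMap A K a) := fun a => by
    rw [hφdef, hψdef, ← IsScalarTower.algebraMap_apply, ← IsScalarTower.algebraMap_apply]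
  have hDK : ∀ x : K, ∃ x' : K, D (ψ x) = ψ x' := by
    intro x
    set a₁ := (IsLocalization.sec (nonZeroDivisors A) x).1
    set a₂ := ((IsLocalization.sec (nonZeroDivisors A) x).2 : A)
    have hx : x * algebraMap A K a₂ = algebraMap A K a₁ :=
      IsLocalization.sec_spec (nonZeroDivisors A) x
    have ha₂ : algebraMap A K a₂ ≠ 0 :=
      IsFractionRing.to_map_ne_zero_of_mem_nonZeroDivisors
        (IsLocalization.sec (nonZeroDivisors A) x).2.2
    obtain ⟨b₁, hb₁⟩ := hδA a₁
    obtain ⟨b₂, hb₂⟩ := hδA a₂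
    have h := hD (ψ x) (algebraMap A C a₁) (algebraMap A C a₂)
      (by rw [hcomm]; exact fun h0 => ha₂ (hψ (by simpa using h0)))
      (by rw [hcomm, hcomm, ← map_mul]; exact congrArg ψ hx)
    rw [hb₁, hb₂, hcomm, hcomm, hcomm] at h
    refine ⟨(algebraMap A K b₁ - x * algebraMap A K b₂) / algebraMap A K a₂, ?_⟩
    apply mul_right_cancel₀ (show ψ (algebraMap A K a₂) ≠ 0 from
      fun h0 => ha₂ (hψ (by simpa using h0)))
    conv_rhs => rw [← map_mul, div_mul_cancel₀ _ ha₂, map_sub, map_mul]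
    exact h
  choose d hd using hDK
  have hdadd : ∀ k₁ k₂ : K, d (k₁ + k₂) = d k₁ + d k₂ := fun k₁ k₂ =>
    hψ (by rw [← hd, map_add, hDadd, hd, hd, map_add])
  have hd0 : d 0 = 0 := hψ (by rw [← hd, map_zero, hD0])
  let dh : K →+ K := AddMonoidHom.mk' d hdadd
  -- trace formula over a basis
  let b : Module.Basis (Fin (Module.finrank K L)) K L := Module.finBasis K L
  have htr : ∀ y : L, Algebra.trace K L y = ∑ j, b.repr (y * b j) j := fun y => by
    rw [Algebra.trace_eq_matrix_trace b y, Matrix.trace]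
    exact Finset.sum_congr rfl fun i _ => Algebra.leftMulMatrix_eq_repr_mul b y i i
  -- the key claim: trace commutes with D through ψ
  have key : ∀ x : L, ψ (Algebra.trace K L (D x)) = D (ψ (Algebra.trace K L x)) := by
    intro x
    let A' : Fin (Module.finrank K L) → Fin (Module.finrank K L) → K :=
      fun m j => b.repr (x * b j) m
    let Cm : Fin (Module.finrank K L) → Fin (Module.finrank K L) → K :=
      fun m j => b.repr (D (b j)) m
    have hx : ∀ j, x * b j = ∑ i, A' i j • b i := fun j => (b.sum_repr (x * b j)).symm
    have hb : ∀ j, D (b j) = ∑ i, Cm i j • b i := fun j => (b.sum_repr (D (b j))).symm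
    have e3 : ∀ j, D x * b j
        = (∑ i, (d (A' i j) • b i + A' i j • D (b i))) - ∑ i, Cm i j • (x * b i) := by
      intro j
      have e1 : D (x * b j) = D x * b j + x * D (b j) := hDmul x (b j)
      have e2 : D (x * b j) = ∑ i, (d (A' i j) • b i + A' i j • D (b i)) := by
        conv_lhs => rw [hx j]
        rw [show D (∑ i, A' i j • b i) = ∑ i, D (A' i j • b i) from map_sum Dh _ _]
        refine Finset.sum_congr rfl fun i _ => ?_
        rw [Algebra.smul_def, hDmul, hd, ← Algebra.smul_def, ← Algebra.smul_def]
      have e4 : x * D (b j) = ∑ i, Cm i j • (x * b i) := by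
        conv_lhs => rw [hb j, Finset.mul_sum]
        refine Finset.sum_congr rfl fun i _ => ?_
        rw [mul_smul_comm]
      linear_combination e2 - e1 - e4
    have hrepr : ∀ m j, b.repr (D x * b j) m
        = d (A' m j) + ((∑ i, A' i j * Cm m i) - ∑ i, Cm i j * A' m i) := by
      intro m j
      rw [e3 j, map_sub, map_sum, map_sum]
      simp only [map_add, map_smul, Finsupp.sub_apply, Finsupp.coe_finset_sum,
        Finset.sum_apply, Finsupp.add_apply, Finsupp.smul_apply, smul_eq_mul,
        Module.Basis.repr_self, Finsupp.single_apply]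
      simp only [show ∀ i, (b.repr (D (b i))) m = Cm m i from fun _ => rfl,
        show ∀ i, (b.repr (x * b i)) m = A' m i from fun _ => rfl,
        mul_ite, mul_one, mul_zero]
      rw [Finset.sum_add_distrib, Finset.sum_ite_eq' Finset.univ m fun i => d (A' i j),
        if_pos (Finset.mem_univ m)]
      ring
    have htrD : Algebra.trace K L (D x) = d (Algebra.trace K L x) := by
      rw [htr (D x), htr x]
      have : ∑ j, b.repr (D x * b j) j
          = ∑ j, (d (A' j j) + ((∑ i, A' i j * Cm j i) - ∑ i, Cm i j * A' j i)) :=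
        Finset.sum_congr rfl fun j _ => hrepr j j
      rw [this, Finset.sum_add_distrib, Finset.sum_sub_distrib]
      have hswap : (∑ j, ∑ i, A' i j * Cm j i) = ∑ j, ∑ i, Cm i j * A' j i := by
        rw [Finset.sum_comm]
        exact Finset.sum_congr rfl fun j _ => Finset.sum_congr rfl fun i _ => mul_comm _ _
      rw [hswap, sub_self, add_zero]
      exact (map_sum dh (fun j => A' j j) Finset.univ).symm
    rw [htrD, ← hd]
  -- assemble
  apply hφ
  have lhs : φ (algebraMap A C (t (δ c))) = ψ (Algebra.trace K L (D (φ c))) := by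
    rw [hcomm, ht, hDφ]
  have rhs : φ (δ (algebraMap A C (t c))) = D (ψ (Algebra.trace K L (φ c))) := by
    rw [← hDφ, hcomm, ht]
  rw [lhs, rhs, key]
end

section
/- Let (C, {·,·}) be a Poisson algebra over a commutative ring k that is an integral domain, and let A be a k-subalgebra of C that is closed under the bracket ({A, A} ⊆ A), is integrally closed in its fraction field, and is such that C is a finitely generated A-module. Then tr_{C/A}({a, c}) = {a, tr_{C/A}(c)} for all a ∈ A and c ∈ C; that is, (C, A, ∂^res, tr_{C/A}) is a Poisson trace order, where ∂^res_a = {a, ·}. -/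
/-!
For `a ∈ A`, `{a, ·}` is a derivation of `C` preserving `A`. Localizations are formally étale,
so it extends to derivations `E` of `L` and `e` of `K`; these agree on `K` since a derivation of a
localization is determined by its values on the base ring. Finally, for a derivation `E` of a
finite free extension `L/K` restricting to `e` on `K`, the multiplication matrices in a basis
satisfy `[E x] = e([x]) + [N, [x]]`, where `N` is the matrix of `E` on the basis; taking traces,
`Tr (E x) = e (Tr x)`.
-/

namespace Derivation

def restrict {R A B : Type*} [CommRing R] [CommRing A] [CommRing B] [Algebra R A] [Algebra R B]
    [Algebra A B] [IsScalarTower R A B] (D : Derivation R B B)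
    (hinj : Function.Injective (algebraMap A B)) (δ : A → A)
    (hδ : ∀ a, algebraMap A B (δ a) = D (algebraMap A B a)) : Derivation R A A where
  toFun := δ
  map_add' x y := hinj <| by simp only [hδ, map_add]
  map_smul' r x := hinj <| by simp only [hδ, algebraMap.coe_smul, map_smul, RingHom.id_apply]
  map_one_eq_zero' := hinj <| by simp [hδ]
  leibniz' x y := hinj <| by simp [hδ]

section FormallyEtale

variable {R S T M : Type*} [CommRing R] [CommRing S] [CommRing T]
  [Algebra R S] [Algebra R T] [Algebra S T] [IsScalarTower R S T] [Algebra.FormallyEtale S T]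
  [AddCommGroup M] [Module R M] [Module S M] [Module T M]
  [IsScalarTower R S M] [IsScalarTower S T M] [IsScalarTower R T M]

noncomputable def extendOfFormallyEtale (D : Derivation R S M) : Derivation R T M :=
  ((D.liftKaehlerDifferential.liftBaseChange T) ∘ₗ
    (KaehlerDifferential.tensorKaehlerEquivOfFormallyEtale R S T).symm.toLinearMap).compDer
    (KaehlerDifferential.D R T)

@[simp]
theorem extendOfFormallyEtale_algebraMap (D : Derivation R S M) (s : S) :
    D.extendOfFormallyEtale (algebraMap S T s) = D s := by
  simp [extendOfFormallyEtale,
    KaehlerDifferential.tensorKaehlerEquivOfFormallyEtale_symm_D_algebraMap]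

end FormallyEtale

theorem ext_of_isLocalization {R S T M : Type*} [CommRing R] [CommRing S] [CommRing T]
    [Algebra R T] [Algebra S T] [AddCommGroup M] [Module R M] [Module T M]
    (P : Submonoid S) [IsLocalization P T] {D₁ D₂ : Derivation R T M}
    (h : ∀ s, D₁ (algebraMap S T s) = D₂ (algebraMap S T s)) : D₁ = D₂ := by
  ext z
  obtain ⟨⟨a, s⟩, hz⟩ := IsLocalization.surj P z
  have hscaled : ∀ D : Derivation R T M,
      algebraMap S T s • D z = D (algebraMap S T a) - z • D (algebraMap S T s) := by
    intro D
    rw [← hz, D.leibniz, add_sub_cancel_left]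
  exact ((IsLocalization.map_units T s).smul_left_cancel).mp (by rw [hscaled, hscaled, h, h])

section Trace

variable {R K L : Type*} [CommRing R] [CommRing K] [CommRing L] [Algebra R K] [Algebra R L]
  [Algebra K L]

theorem map_smul_of_algebraMap (D : Derivation R L L) (d : Derivation R K K)
    (h : ∀ κ, D (algebraMap K L κ) = algebraMap K L (d κ)) (κ : K) (y : L) :
    D (κ • y) = κ • D y + d κ • y := by
  rw [Algebra.smul_def, D.leibniz, h]
  simp only [smul_eq_mul, Algebra.smul_def]
  ring

theorem basis_repr_apply {ι : Type*} [Fintype ι] (b : Module.Basis ι K L) (D : Derivation R L L)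
    (d : Derivation R K K) (h : ∀ κ, D (algebraMap K L κ) = algebraMap K L (d κ)) (y : L)
    (i : ι) :
    b.repr (D y) i = d (b.repr y i) + ∑ k, b.repr (D (b k)) i * b.repr y k := by
  classical
  have hD : D y = ∑ k, (b.repr y k • D (b k) + d (b.repr y k) • b k) := by
    conv_lhs => rw [← b.sum_repr y]
    simp only [map_sum, map_smul_of_algebraMap D d h]
  rw [hD]
  simp [Finset.sum_add_distrib, Finsupp.single_apply, add_comm, mul_comm]

theorem trace_apply_eq_apply_trace [Module.Free K L] [Module.Finite K L] (D : Derivation R L L)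
    (d : Derivation R K K) (h : ∀ κ, D (algebraMap K L κ) = algebraMap K L (d κ)) (x : L) :
    Algebra.trace K L (D x) = d (Algebra.trace K L x) := by
  classical
  let b := Module.Free.chooseBasis K L
  let M := Algebra.leftMulMatrix b x
  let N : Matrix _ _ K := Matrix.of fun i j => b.repr (D (b j)) i
  have hmat : Algebra.leftMulMatrix b (D x) = M.map d + N * M - M * N := by
    ext i j
    have hleft : b.repr (D (x * b j)) i = (M.map d + N * M) i j := by
      rw [basis_repr_apply b D d h]
      simp [M, N, Matrix.mul_apply, Algebra.leftMulMatrix_eq_repr_mul]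
    have hright : b.repr (x * D (b j)) i = (M * N) i j := by
      conv_lhs => rw [← b.sum_repr (D (b j)), Finset.mul_sum]
      simp only [mul_smul_comm, map_sum, LinearEquiv.map_smul, Finsupp.coe_finsetSum,
        Finset.sum_apply, Finsupp.smul_apply, smul_eq_mul, Matrix.mul_apply, Matrix.of_apply, M, N,
        Algebra.leftMulMatrix_eq_repr_mul, mul_comm]
    rw [Algebra.leftMulMatrix_eq_repr_mul, Matrix.sub_apply, ← hleft, ← hright, D.leibniz,
      smul_eq_mul, smul_eq_mul, map_add, Finsupp.add_apply, mul_comm (b j)]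
    ring
  rw [Algebra.trace_eq_matrix_trace b, Algebra.trace_eq_matrix_trace b, hmat, Matrix.trace_sub,
    Matrix.trace_add, Matrix.trace_mul_comm N, add_sub_cancel_right]
  exact (AddMonoidHom.map_trace d.toAddMonoidHom M).symm

end Trace

end Derivation

theorem poissonAlgebraExtension_traceOrder_general {k A C K L : Type*} [CommRing k]
    [CommRing A] [CommRing C] [Algebra k C] [Algebra A C]
    (hinj : Function.Injective (algebraMap A C))
    [Field K] [Algebra A K] [IsFractionRing A K]
    [Field L] [Algebra C L] [IsFractionRing C L]
    [Algebra A L] [Algebra K L] [IsScalarTower A C L] [IsScalarTower A K L]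
    [FiniteDimensional K L]
    -- the Poisson bracket on `C`
    (bracket : C →ₗ[k] C →ₗ[k] C)
    (hleibniz : ∀ a b c : C, bracket a (b * c) = bracket a b * c + b * bracket a c)
    -- `A` is closed under the bracket: `{A, A} ⊆ A`
    (hAbr : ∀ a b : A, ∃ c : A,
      bracket (algebraMap A C a) (algebraMap A C b) = algebraMap A C c)
    -- `t = tr_{C/A}` is the restriction to `C` of the field trace `Tr_{L/K}`
    (t : C → A)
    (ht : ∀ c : C, algebraMap A K (t c) = Algebra.trace K L (algebraMap C L c))
    (a : A) (c : C) :
    algebraMap A C (t (bracket (algebraMap A C a) c))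
      = bracket (algebraMap A C a) (algebraMap A C (t c)) := by
  let D : Derivation ℤ C C := Derivation.mk' ((bracket (algebraMap A C a)).restrictScalars ℤ)
    fun x y => by simp [hleibniz, mul_comm, add_comm]
  choose δ hδ using hAbr a
  let dA : Derivation ℤ A A := D.restrict hinj δ fun x => (hδ x).symm
  have : Algebra.FormallyEtale C L := .of_isLocalization (nonZeroDivisors C)
  have : Algebra.FormallyEtale A K := .of_isLocalization (nonZeroDivisors A)
  let E : Derivation ℤ L L := ((Algebra.linearMap C L).compDer D).extendOfFormallyEtale
  let e : Derivation ℤ K K := ((Algebra.linearMap A K).compDer dA).extendOfFormallyEtale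
  have hE : ∀ x, E (algebraMap C L x) = algebraMap C L (D x) := by simp [E]
  have he : ∀ x, e (algebraMap A K x) = algebraMap A K (δ x) := fun x => by
    rw [Derivation.extendOfFormallyEtale_algebraMap]
    rfl
  have hcompat : E.compAlgebraMap K = (Algebra.linearMap K L).compDer e := by
    refine Derivation.ext_of_isLocalization (nonZeroDivisors A) fun x => ?_
    change E (algebraMap K L (algebraMap A K x)) = algebraMap K L (e (algebraMap A K x))
    rw [he, ← IsScalarTower.algebraMap_apply, ← IsScalarTower.algebraMap_apply,
      IsScalarTower.algebraMap_apply A C L, IsScalarTower.algebraMap_apply A C L, hE]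
    exact congrArg _ (hδ x)
  rw [hδ (t c)]
  refine congrArg _ (IsFractionRing.injective A K ?_)
  calc algebraMap A K (t (D c)) = Algebra.trace K L (E (algebraMap C L c)) := by rw [ht, hE]
    _ = e (Algebra.trace K L (algebraMap C L c)) :=
      Derivation.trace_apply_eq_apply_trace E e (Derivation.congr_fun hcompat) _
    _ = algebraMap A K (δ (t c)) := by rw [← ht, he]

/-- Let `(C, {·,·})` be a Poisson algebra over `k` that is an integral domain, and let
`A` be a `k`-subalgebra with `{A, A} ⊆ A`, integrally closed in its fraction field `K`,
with `C` a finitely generated `A`-module. Then `(C, A, ∂^res, tr_{C/A})` is a Poisson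
trace order: `tr_{C/A}({a, c}) = {a, tr_{C/A}(c)}` for all `a ∈ A`, `c ∈ C`. -/
theorem poissonAlgebraExtension_traceOrder {k A C K L : Type*} [CommRing k]
    [CommRing A] [IsDomain A] [Algebra k A]
    [CommRing C] [IsDomain C] [Algebra k C]
    [Algebra A C] [IsScalarTower k A C]
    (hinj : Function.Injective (algebraMap A C))
    [Module.Finite A C] [IsIntegrallyClosed A]
    [Field K] [Algebra A K] [IsFractionRing A K]
    [Field L] [Algebra C L] [IsFractionRing C L]
    [Algebra A L] [Algebra K L] [IsScalarTower A C L] [IsScalarTower A K L]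
    [FiniteDimensional K L]
    -- the Poisson bracket on `C`
    (bracket : C →ₗ[k] C →ₗ[k] C)
    (hanti : ∀ a b : C, bracket a b = - bracket b a)
    (hjacobi : ∀ a b c : C,
      bracket a (bracket b c) + bracket b (bracket c a) + bracket c (bracket a b) = 0)
    (hleibniz : ∀ a b c : C, bracket a (b * c) = bracket a b * c + b * bracket a c)
    -- `A` is closed under the bracket: `{A, A} ⊆ A`
    (hAbr : ∀ a b : A, ∃ c : A,
      bracket (algebraMap A C a) (algebraMap A C b) = algebraMap A C c)
    -- `t = tr_{C/A}` is the restriction to `C` of the field trace `Tr_{L/K}`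
    (t : C → A)
    (ht : ∀ c : C, algebraMap A K (t c) = Algebra.trace K L (algebraMap C L c))
    (a : A) (c : C) :
    algebraMap A C (t (bracket (algebraMap A C a) c))
      = bracket (algebraMap A C a) (algebraMap A C (t c)) :=
  poissonAlgebraExtension_traceOrder_general hinj bracket hleibniz hAbr t ht a c
end

section
/- Let (R, C, ∂, tr) be a Poisson trace order over a commutative ring k with C an integral domain. Let A be a k-subalgebra of C that is closed under the Poisson bracket of C ({A, A} ⊆ A), is integrally closed in its fraction field, and is such that C is a finitely generated A-module. Then (R, A, ∂|_A, tr_{C/A} ∘ tr) is a Poisson trace order; in particular tr_{C/A}(tr(∂_a(r))) = {a, tr_{C/A}(tr(r))} for all a ∈ A and r ∈ R. -/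
section FracDer

variable {C : Type*} [CommRing C] [IsDomain C] (L : Type*) [Field L] [Algebra C L]
  [IsFractionRing C L] (δ : C → C)

/-- Extension of a derivation `δ` on a domain `C` to its fraction field `L`,
via the quotient rule applied to the canonical section. -/
noncomputable def fracDer (x : L) : L :=
  (algebraMap C L (δ (IsLocalization.sec (nonZeroDivisors C) x).1) *
      algebraMap C L ((IsLocalization.sec (nonZeroDivisors C) x).2 : C) -
    algebraMap C L ((IsLocalization.sec (nonZeroDivisors C) x).1) *
      algebraMap C L (δ ((IsLocalization.sec (nonZeroDivisors C) x).2 : C))) /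
    (algebraMap C L ((IsLocalization.sec (nonZeroDivisors C) x).2 : C)) ^ 2

variable {L}
variable (hadd : ∀ a b : C, δ (a + b) = δ a + δ b)
variable (hmul : ∀ a b : C, δ (a * b) = δ a * b + a * δ b)

include hmul in
theorem fracDer_spec (c s : C) (hs : s ∈ nonZeroDivisors C) (x : L)
    (hx : x * algebraMap C L s = algebraMap C L c) :
    fracDer L δ x = (algebraMap C L (δ c) * algebraMap C L s -
      algebraMap C L c * algebraMap C L (δ s)) / (algebraMap C L s) ^ 2 := by
  unfold fracDer
  set p := IsLocalization.sec (nonZeroDivisors C) x with hp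
  have hx' : x * algebraMap C L (p.2 : C) = algebraMap C L p.1 :=
    IsLocalization.sec_spec (nonZeroDivisors C) x
  have hinj := IsFractionRing.injective C L
  have hcross : c * (p.2 : C) = p.1 * s := by
    apply hinj
    rw [map_mul, map_mul, ← hx, ← hx']; ring
  have hδ : δ c * (p.2 : C) + c * δ (p.2 : C) = δ p.1 * s + p.1 * δ s := by
    have h1 := congrArg δ hcross
    rwa [hmul, hmul] at h1
  have key : (δ p.1 * (p.2 : C) - p.1 * δ (p.2 : C)) * s ^ 2 =
      (δ c * s - c * δ s) * ((p.2 : C)) ^ 2 := by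
    linear_combination (-(s * (p.2 : C))) * hδ + (δ s * (p.2 : C) + s * δ (p.2 : C)) * hcross
  have h2 : algebraMap C L s ≠ 0 :=
    IsFractionRing.to_map_ne_zero_of_mem_nonZeroDivisors hs
  have h2' : algebraMap C L (p.2 : C) ≠ 0 :=
    IsFractionRing.to_map_ne_zero_of_mem_nonZeroDivisors p.2.2
  rw [div_eq_div_iff (pow_ne_zero 2 h2') (pow_ne_zero 2 h2)]
  have := congrArg (algebraMap C L) key
  simpa [map_mul, map_sub, map_pow] using this

include hmul in
theorem fracDer_one : δ 1 = 0 := by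
  have h := hmul 1 1
  simp only [mul_one, one_mul] at h
  exact left_eq_add.mp h


include hmul in
theorem fracDer_algebraMap (c : C) :
    fracDer L δ (algebraMap C L c) = algebraMap C L (δ c) := by
  rw [fracDer_spec δ hmul c 1 (one_mem _) _ (by rw [map_one, mul_one])]
  simp [fracDer_one δ hmul]

include hadd hmul in
theorem fracDer_add (x y : L) :
    fracDer L δ (x + y) = fracDer L δ x + fracDer L δ y := by
  set p := IsLocalization.sec (nonZeroDivisors C) x with hp
  set q := IsLocalization.sec (nonZeroDivisors C) y with hq
  have hx : x * algebraMap C L (p.2 : C) = algebraMap C L p.1 :=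
    IsLocalization.sec_spec (nonZeroDivisors C) x
  have hy : y * algebraMap C L (q.2 : C) = algebraMap C L q.1 :=
    IsLocalization.sec_spec (nonZeroDivisors C) y
  have h2 : algebraMap C L (p.2 : C) ≠ 0 :=
    IsFractionRing.to_map_ne_zero_of_mem_nonZeroDivisors p.2.2
  have h2' : algebraMap C L (q.2 : C) ≠ 0 :=
    IsFractionRing.to_map_ne_zero_of_mem_nonZeroDivisors q.2.2
  have hxy : (x + y) * algebraMap C L ((p.2 : C) * (q.2 : C)) =
      algebraMap C L (p.1 * (q.2 : C) + q.1 * (p.2 : C)) := by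
    rw [map_mul, map_add, map_mul, map_mul]
    linear_combination algebraMap C L (q.2 : C) * hx + algebraMap C L (p.2 : C) * hy
  rw [fracDer_spec δ hmul _ _ (mul_mem p.2.2 q.2.2) _ hxy,
    fracDer_spec δ hmul _ _ p.2.2 x hx, fracDer_spec δ hmul _ _ q.2.2 y hy]
  simp only [hadd, hmul]
  push_cast [map_add, map_mul]
  field_simp
  ring

include hmul in
theorem fracDer_mul (x y : L) :
    fracDer L δ (x * y) = fracDer L δ x * y + x * fracDer L δ y := by
  set p := IsLocalization.sec (nonZeroDivisors C) x with hp
  set q := IsLocalization.sec (nonZeroDivisors C) y with hq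
  have hx : x * algebraMap C L (p.2 : C) = algebraMap C L p.1 :=
    IsLocalization.sec_spec (nonZeroDivisors C) x
  have hy : y * algebraMap C L (q.2 : C) = algebraMap C L q.1 :=
    IsLocalization.sec_spec (nonZeroDivisors C) y
  have h2 : algebraMap C L (p.2 : C) ≠ 0 :=
    IsFractionRing.to_map_ne_zero_of_mem_nonZeroDivisors p.2.2
  have h2' : algebraMap C L (q.2 : C) ≠ 0 :=
    IsFractionRing.to_map_ne_zero_of_mem_nonZeroDivisors q.2.2
  have hxy : (x * y) * algebraMap C L ((p.2 : C) * (q.2 : C)) =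
      algebraMap C L (p.1 * q.1) := by
    rw [map_mul, map_mul]
    linear_combination y * algebraMap C L (q.2 : C) * hx + algebraMap C L p.1 * hy
  have hx2 : x = algebraMap C L p.1 / algebraMap C L (p.2 : C) := by
    field_simp [← hx]
    exact hx
  have hy2 : y = algebraMap C L q.1 / algebraMap C L (q.2 : C) := by
    field_simp [← hy]
    exact hy
  rw [fracDer_spec δ hmul _ _ (mul_mem p.2.2 q.2.2) _ hxy,
    fracDer_spec δ hmul _ _ p.2.2 x hx, fracDer_spec δ hmul _ _ q.2.2 y hy, hx2, hy2]
  simp only [hmul]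
  push_cast [map_add, map_mul]
  field_simp
  ring

end FracDer

section TraceDer

variable {K L : Type*} [Field K] [Field L] [Algebra K L] [FiniteDimensional K L]
  (δL : L → L) (δK : K → K)
  (hLadd : ∀ x y, δL (x + y) = δL x + δL y)
  (hLmul : ∀ x y, δL (x * y) = δL x * y + x * δL y)
  (hKadd : ∀ x y, δK (x + y) = δK x + δK y)
  (hcomp : ∀ m : K, δL (algebraMap K L m) = algebraMap K L (δK m))

include hLadd hLmul hKadd hcomp in
theorem trace_der_comm (x : L) :
    Algebra.trace K L (δL x) = δK (Algebra.trace K L x) := by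
  classical
  set b := Module.finBasis K L with hb
  let D : L →+ L := AddMonoidHom.mk' δL hLadd
  let DK : K →+ K := AddMonoidHom.mk' δK hKadd
  have hsmul : ∀ (m : K) (y : L), δL (m • y) = δK m • y + m • δL y := by
    intro m y
    rw [Algebra.smul_def, hLmul, hcomp, Algebra.smul_def, Algebra.smul_def]
  have key : ∀ i, δL x * b i =
      (∑ j, δK (b.repr (x * b i) j) • b j) +
        ((∑ j, (b.repr (x * b i) j) • δL (b j)) -
          ∑ l, (b.repr (δL (b i)) l) • (x * b l)) := by
    intro i
    have e1 : δL (x * b i) = δL x * b i + x * δL (b i) := hLmul x (b i)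
    have e2 : δL (x * b i) =
        (∑ j, δK (b.repr (x * b i) j) • b j) + ∑ j, (b.repr (x * b i) j) • δL (b j) := by
      conv_lhs => rw [show x * b i = ∑ j, b.repr (x * b i) j • b j from
        (b.sum_repr (x * b i)).symm]
      rw [show δL (∑ j, b.repr (x * b i) j • b j) = D (∑ j, b.repr (x * b i) j • b j)
        from rfl, map_sum, ← Finset.sum_add_distrib]
      exact Finset.sum_congr rfl fun j _ => hsmul _ _
    have e3 : x * δL (b i) = ∑ l, (b.repr (δL (b i)) l) • (x * b l) := by
      conv_lhs => rw [show δL (b i) = ∑ l, b.repr (δL (b i)) l • b l from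
        (b.sum_repr (δL (b i))).symm]
      rw [Finset.mul_sum]
      exact Finset.sum_congr rfl fun l _ => (mul_smul_comm _ _ _)
    have e4 := e1.symm.trans e2
    rw [e3] at e4
    exact (eq_sub_of_add_eq e4).trans (add_sub_assoc _ _ _)
  have hrepr_sum : ∀ (g : Fin (Module.finrank K L) → L) (i),
      b.repr (∑ j, g j) i = ∑ j, b.repr (g j) i := by
    intro g i
    rw [map_sum, Finsupp.coe_finset_sum, Finset.sum_apply]
  have hterm : ∀ i, b.repr (δL x * b i) i =
      δK (b.repr (x * b i) i) +
        ((∑ j, b.repr (x * b i) j * b.repr (δL (b j)) i) -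
          ∑ l, b.repr (δL (b i)) l * b.repr (x * b l) i) := by
    intro i
    rw [key i, map_add, Finsupp.add_apply, map_sub, Finsupp.sub_apply,
      hrepr_sum, hrepr_sum, hrepr_sum]
    simp only [map_smul, Finsupp.smul_apply, smul_eq_mul, Module.Basis.repr_self,
      Finsupp.single_apply, mul_ite, mul_one, mul_zero, Finset.sum_ite_eq',
      Finset.mem_univ, if_true]
  have cancel : (∑ i, ∑ j, b.repr (x * b i) j * b.repr (δL (b j)) i) =
      ∑ i, ∑ l, b.repr (δL (b i)) l * b.repr (x * b l) i := by
    rw [Finset.sum_comm]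
    exact Finset.sum_congr rfl fun i _ => Finset.sum_congr rfl fun j _ => mul_comm _ _
  rw [Algebra.trace_eq_matrix_trace b, Algebra.trace_eq_matrix_trace b,
    Matrix.trace, Matrix.trace]
  simp only [Matrix.diag, Algebra.leftMulMatrix_eq_repr_mul]
  rw [show δK (∑ i, (b.repr (x * b i)) i) = ∑ i, δK ((b.repr (x * b i)) i) from
    map_sum DK _ _]
  rw [Finset.sum_congr rfl fun i _ => hterm i, Finset.sum_add_distrib,
    Finset.sum_sub_distrib, cancel, sub_self, add_zero]

end TraceDer


/-- Base change for Poisson trace orders: if `(R, C, ∂, tr)` is a Poisson trace order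
with `C` an integral domain, and `A` is a `k`-subalgebra of `C` closed under the Poisson
bracket, integrally closed in its fraction field `K`, with `C` a finitely generated
`A`-module, then `(R, A, ∂|_A, tr_{C/A} ∘ tr)` is a Poisson trace order:
`tr_{C/A}(tr(∂_a(r))) = {a, tr_{C/A}(tr(r))}` for all `a ∈ A`, `r ∈ R`. -/
theorem poissonTraceOrder_baseChange {k R C A K L : Type*} [CommRing k]
    [Ring R] [Algebra k R]
    [CommRing C] [IsDomain C] [Algebra k C] [Algebra C R] [IsScalarTower k C R]
    (hinjCR : Function.Injective (algebraMap C R))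
    [Module.Finite C R]
    [CommRing A] [IsDomain A] [Algebra k A] [Algebra A C] [IsScalarTower k A C]
    (hinjAC : Function.Injective (algebraMap A C))
    [Module.Finite A C] [IsIntegrallyClosed A]
    [Field K] [Algebra A K] [IsFractionRing A K]
    [Field L] [Algebra C L] [IsFractionRing C L]
    [Algebra A L] [Algebra K L] [IsScalarTower A C L] [IsScalarTower A K L]
    [FiniteDimensional K L]
    -- the Poisson bracket on `C`
    (bracket : C →ₗ[k] C →ₗ[k] C)
    (hanti : ∀ a b : C, bracket a b = - bracket b a)
    (hjacobi : ∀ a b c : C,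
      bracket a (bracket b c) + bracket b (bracket c a) + bracket c (bracket a b) = 0)
    (hleibniz : ∀ a b c : C, bracket a (b * c) = bracket a b * c + b * bracket a c)
    -- the map `∂ : C → Der_k(R)`
    (par : C →ₗ[k] R →ₗ[k] R)
    (hder : ∀ (c : C) (x y : R), par c (x * y) = par c x * y + x * par c y)
    (hres : ∀ c a : C, par c (algebraMap C R a) = algebraMap C R (bracket c a))
    -- the trace map of the Poisson trace order `(R, C, ∂, tr)`
    (tr : R →ₗ[C] C) (hcyc : ∀ x y : R, tr (x * y) = tr (y * x))
    (hcompat : ∀ (c : C) (r : R), tr (par c r) = bracket c (tr r))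
    -- `A` is a Poisson subalgebra: `{A, A} ⊆ A`
    (hAbr : ∀ a b : A, ∃ c : A,
      bracket (algebraMap A C a) (algebraMap A C b) = algebraMap A C c)
    -- `t = tr_{C/A}` is the restriction to `C` of the field trace `Tr_{L/K}`
    (t : C → A)
    (ht : ∀ c : C, algebraMap A K (t c) = Algebra.trace K L (algebraMap C L c))
    (a : A) (r : R) :
    algebraMap A C (t (tr (par (algebraMap A C a) r)))
      = bracket (algebraMap A C a) (algebraMap A C (t (tr r))) := by

  classical
  have hinjAK := IsFractionRing.injective A K
  have hinjKL : Function.Injective (algebraMap K L) := (algebraMap K L).injective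
  -- the derivation on C
  set δC : C → C := fun c => bracket (algebraMap A C a) c with hδC
  have hCadd : ∀ u v : C, δC (u + v) = δC u + δC v := fun u v => map_add _ u v
  have hCmul : ∀ u v : C, δC (u * v) = δC u * v + u * δC v := fun u v => hleibniz _ u v
  -- the induced derivation on A
  choose dA hdA using hAbr a
  have hdA' : ∀ b : A, δC (algebraMap A C b) = algebraMap A C (dA b) := hdA
  have hAadd : ∀ u v : A, dA (u + v) = dA u + dA v := by
    intro u v
    apply hinjAC
    rw [map_add, ← hdA', ← hdA', ← hdA', map_add, hCadd]
  have hAmul : ∀ u v : A, dA (u * v) = dA u * v + u * dA v := by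
    intro u v
    apply hinjAC
    rw [map_add, map_mul, map_mul, ← hdA', ← hdA', ← hdA', map_mul, hCmul]
  -- extensions to the fraction fields
  set δL : L → L := fracDer L δC with hδL
  set δK : K → K := fracDer K dA with hδK
  have tower1 : ∀ z : A, algebraMap K L (algebraMap A K z) = algebraMap C L (algebraMap A C z) := by
    intro z
    rw [← IsScalarTower.algebraMap_apply, IsScalarTower.algebraMap_apply A C L]
  -- compatibility of δK and δL
  have hKL : ∀ m : K, algebraMap K L (δK m) = δL (algebraMap K L m) := by
    intro m
    set q := IsLocalization.sec (nonZeroDivisors A) m with hq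
    have hspec : m * algebraMap A K (q.2 : A) = algebraMap A K q.1 :=
      IsLocalization.sec_spec (nonZeroDivisors A) m
    have hq2 : algebraMap A C (q.2 : A) ∈ nonZeroDivisors C := by
      rw [mem_nonZeroDivisors_iff_ne_zero]
      rw [(map_ne_zero_iff _ hinjAC)]
      exact nonZeroDivisors.ne_zero q.2.2
    have hspecL : (algebraMap K L m) * algebraMap C L (algebraMap A C (q.2 : A)) =
        algebraMap C L (algebraMap A C q.1) := by
      have := congrArg (algebraMap K L) hspec
      rwa [map_mul, tower1, tower1] at this
    rw [hδK, fracDer_spec dA hAmul q.1 (q.2 : A) q.2.2 m hspec,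
      hδL, fracDer_spec δC hCmul _ _ hq2 _ hspecL]
    rw [map_div₀, map_sub, map_mul, map_mul, map_pow, tower1, tower1, tower1, tower1,
      hdA' q.1, hdA' (q.2 : A)]
  have hKadd : ∀ u v : K, δK (u + v) = δK u + δK v := by
    intro u v
    apply hinjKL
    rw [map_add, hKL, hKL, hKL, map_add]
    exact fracDer_add δC hCadd hCmul _ _
  -- trace commutes with the derivation
  have htr : ∀ x : L, Algebra.trace K L (δL x) = δK (Algebra.trace K L x) :=
    trace_der_comm δL δK (fracDer_add δC hCadd hCmul) (fracDer_mul δC hCmul) hKadd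
      (fun m => (hKL m).symm)
  -- δK extends dA
  have hKA : ∀ b : A, δK (algebraMap A K b) = algebraMap A K (dA b) := by
    intro b
    apply hinjKL
    rw [hKL, tower1, tower1, hδL, fracDer_algebraMap δC hCmul, hdA' b]
  -- assemble
  rw [hcompat]
  have rhs : bracket (algebraMap A C a) (algebraMap A C (t (tr r)))
      = algebraMap A C (dA (t (tr r))) := hdA' _
  rw [rhs]
  congr 1
  apply hinjAK
  rw [ht, ← fracDer_algebraMap δC hCmul, ← hδL, htr, ← ht, hKA]
end

section
/- Let k be a commutative ring, R an associative k-algebra, C a k-subalgebra of the center of R that is an integral domain, and tr : R → C a trace map. Let A be a k-subalgebra of C that is integrally closed in its fraction field and such that C is a finitely generated A-module. Let δ be a k-linear derivation of R with δ(C) ⊆ C and δ(A) ⊆ A, commuting with tr (δ(tr(r)) = tr(δ(r)) for all r ∈ R). Then the composite trace tr_{C/A} ∘ tr : R → A also commutes with δ: tr_{C/A}(tr(δ(r))) = δ(tr_{C/A}(tr(r))) for all r ∈ R. -/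
section ExtendDeriv

variable {C L : Type*} [CommRing C] [IsDomain C] [Field L] [Algebra C L] [IsFractionRing C L]

/-- Quotient-rule extension of a derivation-like function to the fraction field. -/
noncomputable def extD (d : C → C) (x : L) : L :=
  (algebraMap C L (d (IsLocalization.sec (nonZeroDivisors C) x).1)
      * algebraMap C L ((IsLocalization.sec (nonZeroDivisors C) x).2 : C)
    - algebraMap C L (IsLocalization.sec (nonZeroDivisors C) x).1
      * algebraMap C L (d ((IsLocalization.sec (nonZeroDivisors C) x).2 : C)))
    / (algebraMap C L ((IsLocalization.sec (nonZeroDivisors C) x).2 : C)) ^ 2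

variable (d : C → C) (hadd : ∀ x y, d (x + y) = d x + d y)
  (hmul : ∀ x y, d (x * y) = d x * y + x * d y)

theorem map_ne_zero_of_ne_zero {s : C} (hs : s ≠ 0) : algebraMap C L s ≠ 0 := fun h0 =>
  hs (IsFractionRing.injective C L (by rw [h0, map_zero]))

include hadd hmul in
theorem extD_spec (x : L) (c s : C) (hs : s ≠ 0) (h : x * algebraMap C L s = algebraMap C L c) :
    extD d x = (algebraMap C L (d c) * algebraMap C L s
      - algebraMap C L c * algebraMap C L (d s)) / (algebraMap C L s) ^ 2 := by
  set p := IsLocalization.sec (nonZeroDivisors C) x with hp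
  have hspec : x * algebraMap C L (p.2 : C) = algebraMap C L p.1 :=
    IsLocalization.sec_spec (nonZeroDivisors C) x
  have hp2 : (p.2 : C) ≠ 0 := mem_nonZeroDivisors_iff_ne_zero.mp p.2.2
  have hp2L : algebraMap C L (p.2 : C) ≠ 0 := map_ne_zero_of_ne_zero hp2
  have hsL : algebraMap C L s ≠ 0 := map_ne_zero_of_ne_zero hs
  have hcross : c * (p.2 : C) = p.1 * s := by
    apply IsFractionRing.injective C L
    rw [map_mul, map_mul, ← h, ← hspec]; ring
  have hd : d c * (p.2 : C) + c * d (p.2 : C) = d p.1 * s + p.1 * d s := by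
    rw [← hmul, ← hmul, hcross]
  have hdL : algebraMap C L (d c) * algebraMap C L (p.2 : C)
      + algebraMap C L c * algebraMap C L (d (p.2 : C))
      = algebraMap C L (d p.1) * algebraMap C L s
      + algebraMap C L p.1 * algebraMap C L (d s) := by
    rw [← map_mul, ← map_mul, ← map_mul, ← map_mul, ← map_add, ← map_add, hd]
  rw [extD, ← hp, div_eq_div_iff (pow_ne_zero 2 hp2L) (pow_ne_zero 2 hsL)]
  have hcrossL : algebraMap C L c * algebraMap C L (p.2 : C)
      = algebraMap C L p.1 * algebraMap C L s := by
    rw [← map_mul, ← map_mul, hcross]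
  linear_combination (-(algebraMap C L s * algebraMap C L (p.2 : C))) * hdL
    + (algebraMap C L (d (p.2:C)) * algebraMap C L s
        + algebraMap C L (d s) * algebraMap C L (p.2:C)) * hcrossL

end ExtendDeriv

section More
variable {C L : Type*} [CommRing C] [IsDomain C] [Field L] [Algebra C L] [IsFractionRing C L]
variable (d : C → C) (hadd : ∀ x y, d (x + y) = d x + d y)
  (hmul : ∀ x y, d (x * y) = d x * y + x * d y)

theorem exists_rep (x : L) : ∃ c s : C, s ≠ 0 ∧ x * algebraMap C L s = algebraMap C L c :=
  ⟨(IsLocalization.sec (nonZeroDivisors C) x).1, (IsLocalization.sec (nonZeroDivisors C) x).2,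
    mem_nonZeroDivisors_iff_ne_zero.mp (IsLocalization.sec (nonZeroDivisors C) x).2.2,
    IsLocalization.sec_spec (nonZeroDivisors C) x⟩

include hmul in
theorem d_one : d 1 = 0 := by
  have h := hmul 1 1
  simp only [mul_one, one_mul] at h
  have : d 1 + 0 = d 1 + d 1 := by rw [add_zero]; exact h
  exact (add_left_cancel this).symm

include hadd hmul in
theorem extD_algebraMap (c : C) : extD d (algebraMap C L c) = algebraMap C L (d c) := by
  rw [extD_spec d hadd hmul (algebraMap C L c) c 1 one_ne_zero (by rw [map_one, mul_one]),
    d_one d hmul]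
  rw [map_one, map_zero, one_pow, div_one, mul_one, mul_zero, sub_zero]

include hadd hmul in
theorem extD_add (x y : L) : extD d (x + y) = extD d x + extD d y := by
  obtain ⟨c, s, hs, hx⟩ := exists_rep (C := C) x
  obtain ⟨e, u, hu, hy⟩ := exists_rep (C := C) y
  have hsu : s * u ≠ 0 := mul_ne_zero hs hu
  have hxy : (x + y) * algebraMap C L (s * u) = algebraMap C L (c * u + e * s) := by
    rw [map_mul, map_add, map_mul, map_mul]
    have hsL : algebraMap C L s ≠ 0 := map_ne_zero_of_ne_zero hs
    have huL : algebraMap C L u ≠ 0 := map_ne_zero_of_ne_zero hu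
    linear_combination algebraMap C L u * hx + algebraMap C L s * hy
  rw [extD_spec d hadd hmul _ _ _ hsu hxy, extD_spec d hadd hmul _ _ _ hs hx,
    extD_spec d hadd hmul _ _ _ hu hy, hadd, hmul, hmul, hmul]
  have hsL : algebraMap C L s ≠ 0 := map_ne_zero_of_ne_zero hs
  have huL : algebraMap C L u ≠ 0 := map_ne_zero_of_ne_zero hu
  push_cast [map_add, map_mul]
  field_simp
  ring

include hadd hmul in
theorem extD_mul (x y : L) : extD d (x * y) = extD d x * y + x * extD d y := by
  obtain ⟨c, s, hs, hx⟩ := exists_rep (C := C) x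
  obtain ⟨e, u, hu, hy⟩ := exists_rep (C := C) y
  have hsL : algebraMap C L s ≠ 0 := map_ne_zero_of_ne_zero hs
  have huL : algebraMap C L u ≠ 0 := map_ne_zero_of_ne_zero hu
  have hsu : s * u ≠ 0 := mul_ne_zero hs hu
  have hxy : (x * y) * algebraMap C L (s * u) = algebraMap C L (c * e) := by
    rw [map_mul, map_mul]
    linear_combination y * algebraMap C L u * hx + algebraMap C L c * hy
  have hxv : x = algebraMap C L c / algebraMap C L s := by
    rw [eq_div_iff hsL]; exact hx
  have hyv : y = algebraMap C L e / algebraMap C L u := by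
    rw [eq_div_iff huL]; exact hy
  rw [extD_spec d hadd hmul _ _ _ hsu hxy, extD_spec d hadd hmul _ _ _ hs hx,
    extD_spec d hadd hmul _ _ _ hu hy, hmul, hmul, hxv, hyv]
  push_cast [map_add, map_mul]
  field_simp
  ring

end More

section TraceComm

variable {K L : Type*} [Field K] [Field L] [Algebra K L] [FiniteDimensional K L]

theorem trace_comm_of_deriv (D : L → L) (Dadd : ∀ x y, D (x + y) = D x + D y)
    (Dmul : ∀ x y, D (x * y) = D x * y + x * D y)
    (dk : K → K) (dkadd : ∀ x y, dk (x + y) = dk x + dk y)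
    (dkmul : ∀ x y, dk (x * y) = dk x * y + x * dk y)
    (hcomp : ∀ a : K, D (algebraMap K L a) = algebraMap K L (dk a)) (x : L) :
    Algebra.trace K L (D x) = dk (Algebra.trace K L x) := by
  classical
  have dk0 : dk 0 = 0 := by
    have h := dkadd 0 0; rw [add_zero] at h
    have : dk 0 + 0 = dk 0 + dk 0 := by rw [add_zero]; exact h
    exact (add_left_cancel this).symm
  -- package dk as an AddMonoidHom for map_sum
  let dkh : K →+ K := AddMonoidHom.mk' dk dkadd
  let b := Module.Free.chooseBasis K L
  set ι := Module.Free.ChooseBasisIndex K L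
  have Dsmul : ∀ (a : K) (y : L), D (a • y) = dk a • y + a • D y := by
    intro a y
    rw [Algebra.smul_def, Dmul, hcomp, Algebra.smul_def, Algebra.smul_def]
  -- the "coordinatewise dk" map
  set E : L → L := fun y => ∑ i, dk (b.repr y i) • b i with hE
  have hEadd : ∀ y z, E (y + z) = E y + E z := by
    intro y z
    simp only [hE, map_add, Finsupp.add_apply, dkadd, add_smul, Finset.sum_add_distrib]
  have hEsmul : ∀ (a : K) (y : L), E (a • y) = dk a • y + a • E y := by
    intro a y
    have : ∀ i, dk ((b.repr (a • y)) i) • b i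
        = dk a • (b.repr y i • b i) + a • (dk (b.repr y i) • b i) := by
      intro i
      rw [map_smul, Finsupp.smul_apply, smul_eq_mul, dkmul, add_smul, smul_smul, smul_smul,
        mul_smul]
    simp only [hE, this, Finset.sum_add_distrib, ← Finset.smul_sum, b.sum_repr]
  have hEbasis : ∀ i, E (b i) = 0 := by
    intro i
    have dk1 : dk 1 = 0 := by
      have h := dkmul 1 1
      simp only [mul_one, one_mul] at h
      have : dk 1 + 0 = dk 1 + dk 1 := by rw [add_zero]; exact h
      exact (add_left_cancel this).symm
    simp only [hE, Module.Basis.repr_self]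
    rw [Finset.sum_eq_single i]
    · simp [dk1]
    · intro j _ hj
      rw [Finsupp.single_eq_of_ne' (Ne.symm hj), dk0, zero_smul]
    · intro h; exact absurd (Finset.mem_univ i) h
  -- the linear part of D
  have hDEsmul : ∀ (a : K) (y : L), D (a • y) - E (a • y) = a • (D y - E y) := by
    intro a y; rw [Dsmul, hEsmul, smul_sub]; abel
  let Dlin : L →ₗ[K] L :=
    { toFun := fun y => D y - E y
      map_add' := fun y z => by rw [Dadd, hEadd]; abel
      map_smul' := fun a y => by dsimp only [RingHom.id_apply]; exact hDEsmul a y }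
  have hD : ∀ y, D y = Dlin y + E y := fun y => by simp [Dlin]
  -- decompose lmul (D x)
  let mulx : L →ₗ[K] L := Algebra.lmul K L x
  let G : L →ₗ[K] L := Algebra.lmul K L (D x) - (Dlin ∘ₗ mulx - mulx ∘ₗ Dlin)
  have hG : ∀ y, G y = E (x * y) - x * E y := by
    intro y
    have h1 : D x * y = D (x * y) - x * D y := by
      rw [Dmul]; ring
    simp only [G, LinearMap.sub_apply, LinearMap.comp_apply, Algebra.coe_lmul_eq_mul,
      LinearMap.mul_apply', mulx, h1, hD (x * y), hD y]
    ring
  -- traces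
  have htr : Algebra.trace K L (D x) = LinearMap.trace K L G := by
    have : Algebra.lmul K L (D x) = G + (Dlin ∘ₗ mulx - mulx ∘ₗ Dlin) := by simp [G]
    have h2 : LinearMap.trace K L (Dlin ∘ₗ mulx) = LinearMap.trace K L (mulx ∘ₗ Dlin) :=
      LinearMap.trace_comp_comm' mulx Dlin
    have hS : LinearMap.trace K L (Dlin ∘ₗ mulx - mulx ∘ₗ Dlin) = 0 := by
      rw [map_sub, h2, sub_self]
    rw [Algebra.trace_apply, this, map_add, hS, add_zero]
  rw [htr]
  rw [LinearMap.trace_eq_matrix_trace K b G, Algebra.trace_eq_matrix_trace b x]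
  rw [Matrix.trace, Matrix.trace]
  have hdiag : ∀ j, LinearMap.toMatrix b b G j j = dk (Algebra.leftMulMatrix b x j j) := by
    intro j
    rw [LinearMap.toMatrix_apply, Algebra.leftMulMatrix_eq_repr_mul]
    rw [hG, hEbasis j, mul_zero, sub_zero, hE]
    rw [b.repr_sum_self]
  simp only [Matrix.diag, hdiag]
  exact (map_sum dkh _ _).symm

end TraceComm


/-- Let `R` be a `k`-algebra, `C` a central `k`-subalgebra that is an integral domain,
`tr : R → C` a trace map, and `A ⊆ C` a `k`-subalgebra integrally closed in its fraction
field `K`, with `C` a finitely generated `A`-module. If `δ` is a `k`-linear derivation of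
`R` with `δ(C) ⊆ C` and `δ(A) ⊆ A` commuting with `tr`, then the composite trace
`tr_{C/A} ∘ tr : R → A` also commutes with `δ`. -/
theorem compositeTrace_comm_derivation {k R C A K L : Type*} [CommRing k]
    [Ring R] [Algebra k R]
    [CommRing C] [IsDomain C] [Algebra k C] [Algebra C R] [IsScalarTower k C R]
    (hinjCR : Function.Injective (algebraMap C R))
    [CommRing A] [IsDomain A] [Algebra k A] [Algebra A C] [IsScalarTower k A C]
    (hinjAC : Function.Injective (algebraMap A C))
    [Module.Finite A C] [IsIntegrallyClosed A]
    [Algebra A R] [IsScalarTower A C R]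
    [Field K] [Algebra A K] [IsFractionRing A K]
    [Field L] [Algebra C L] [IsFractionRing C L]
    [Algebra A L] [Algebra K L] [IsScalarTower A C L] [IsScalarTower A K L]
    [FiniteDimensional K L]
    -- the trace map
    (tr : R →ₗ[C] C) (hcyc : ∀ x y : R, tr (x * y) = tr (y * x))
    -- the derivation of `R` preserving `C` and `A`
    (δ : R →ₗ[k] R) (hδ : ∀ x y : R, δ (x * y) = δ x * y + x * δ y)
    (hδC : ∀ c : C, ∃ c' : C, δ (algebraMap C R c) = algebraMap C R c')
    (hδA : ∀ a : A, ∃ b : A, δ (algebraMap A R a) = algebraMap A R b)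
    -- `δ` commutes with `tr`
    (hcomm : ∀ r : R, δ (algebraMap C R (tr r)) = algebraMap C R (tr (δ r)))
    -- `t = tr_{C/A}` is the restriction to `C` of the field trace `Tr_{L/K}`
    (t : C → A)
    (ht : ∀ c : C, algebraMap A K (t c) = Algebra.trace K L (algebraMap C L c))
    (r : R) :
    algebraMap A R (t (tr (δ r))) = δ (algebraMap A R (t (tr r))) := by

  classical
  -- the induced derivation on C
  set dC : C → C := fun c => Classical.choose (hδC c) with hdC
  have hdCspec : ∀ c, δ (algebraMap C R c) = algebraMap C R (dC c) :=
    fun c => Classical.choose_spec (hδC c)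
  have hdCadd : ∀ x y, dC (x + y) = dC x + dC y := by
    intro x y; apply hinjCR
    rw [map_add, ← hdCspec, map_add, map_add, hdCspec, hdCspec]
  have hdCmul : ∀ x y, dC (x * y) = dC x * y + x * dC y := by
    intro x y; apply hinjCR
    rw [← hdCspec, map_mul, hδ, map_add, map_mul, map_mul, hdCspec, hdCspec]
  -- the induced derivation on A
  have hinjAR : Function.Injective (algebraMap A R) := by
    rw [IsScalarTower.algebraMap_eq A C R]
    exact hinjCR.comp hinjAC
  set dA : A → A := fun a => Classical.choose (hδA a) with hdA
  have hdAspec : ∀ a, δ (algebraMap A R a) = algebraMap A R (dA a) :=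
    fun a => Classical.choose_spec (hδA a)
  have hdAadd : ∀ x y, dA (x + y) = dA x + dA y := by
    intro x y; apply hinjAR
    rw [map_add, ← hdAspec, map_add, map_add, hdAspec, hdAspec]
  have hdAmul : ∀ x y, dA (x * y) = dA x * y + x * dA y := by
    intro x y; apply hinjAR
    rw [← hdAspec, map_mul, hδ, map_add, map_mul, map_mul, hdAspec, hdAspec]
  -- compatibility of dA and dC
  have hAC : ∀ a, algebraMap A C (dA a) = dC (algebraMap A C a) := by
    intro a; apply hinjCR
    rw [← hdCspec, ← IsScalarTower.algebraMap_apply A C R,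
      ← IsScalarTower.algebraMap_apply A C R, hdAspec]
  -- the extended derivations on L and K
  have hcompat : ∀ x : K, extD dC (algebraMap K L x) = algebraMap K L (extD dA x) := by
    intro x
    obtain ⟨a, s, hs, hx⟩ := exists_rep (C := A) (L := K) x
    have hsC : algebraMap A C s ≠ 0 := fun h => hs (hinjAC (by rw [h, map_zero]))
    have key : ∀ y : A, algebraMap C L (algebraMap A C y) = algebraMap K L (algebraMap A K y) :=
      fun y => by
        rw [← IsScalarTower.algebraMap_apply A C L, IsScalarTower.algebraMap_apply A K L]
    have hxL : algebraMap K L x * algebraMap C L (algebraMap A C s)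
        = algebraMap C L (algebraMap A C a) := by
      rw [key, key, ← map_mul, hx]
    rw [extD_spec dC hdCadd hdCmul _ _ _ hsC hxL, extD_spec dA hdAadd hdAmul _ _ _ hs hx]
    rw [← hAC, ← hAC]
    rw [map_div₀, map_pow, map_sub, map_mul, map_mul, key, key, key, key]
  have trace_comm := trace_comm_of_deriv (K := K) (extD dC)
    (extD_add dC hdCadd hdCmul) (extD_mul dC hdCadd hdCmul)
    (extD dA) (extD_add dA hdAadd hdAmul) (extD_mul dA hdAadd hdAmul) hcompat
  -- the trace commutes with the derivation on C
  have h1 : tr (δ r) = dC (tr r) := hinjCR (by rw [← hcomm, hdCspec])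
  rw [h1, hdAspec]
  suffices h2 : t (dC (tr r)) = dA (t (tr r)) by rw [h2]
  apply IsFractionRing.injective A K
  rw [ht, ← extD_algebraMap dC hdCadd hdCmul, trace_comm, ← ht,
    extD_algebraMap dA hdAadd hdAmul]
end

section
/- Let F be a field and n a positive integer. Every F-linear derivation δ of the matrix algebra M_n(F) is inner: there exists X ∈ M_n(F) such that δ(M) = XM − MX for all M ∈ M_n(F). -/
open Matrix in
/-- Every `F`-linear derivation of the matrix algebra `Mₙ(F)` over a field `F` is inner. -/
theorem matrix_derivation_isInner {F : Type*} [Field F] (n : ℕ) (hn : 0 < n)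
    (δ : Matrix (Fin n) (Fin n) F →ₗ[F] Matrix (Fin n) (Fin n) F)
    (hδ : ∀ M N : Matrix (Fin n) (Fin n) F, δ (M * N) = δ M * N + M * δ N) :
    ∃ X : Matrix (Fin n) (Fin n) F, ∀ M : Matrix (Fin n) (Fin n) F,
      δ M = X * M - M * X := by
  set z : Fin n := ⟨0, hn⟩
  set E : Fin n → Fin n → Matrix (Fin n) (Fin n) F :=
    fun i j => single i j (1 : F) with hE
  have hmul_same : ∀ i j k : Fin n, E i j * E j k = E i k := by
    intro i j k; simp [hE]
  have hmul_ne : ∀ {j k : Fin n} (i l : Fin n), j ≠ k → E i j * E k l = 0 := by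
    intro j k i l h
    exact Matrix.single_mul_single_of_ne (c := (1 : F)) i j k h 1
  have hone : (1 : Matrix (Fin n) (Fin n) F) = ∑ k, E k k := by
    ext a b
    rw [Matrix.sum_apply]
    by_cases hab : a = b
    · subst hab
      rw [Matrix.one_apply_eq, Finset.sum_eq_single a]
      · simp [hE]
      · intro k _ hka
        exact Matrix.single_apply_of_row_ne hka _ _ _
      · intro h; exact absurd (Finset.mem_univ a) h
    · rw [Matrix.one_apply_ne hab]
      refine (Finset.sum_eq_zero fun k _ => ?_).symm
      apply Matrix.single_apply_of_ne
      rintro ⟨rfl, rfl⟩; exact hab rfl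
  set X : Matrix (Fin n) (Fin n) F := ∑ k, δ (E k z) * E z k with hX
  refine ⟨X, ?_⟩
  -- key vanishing lemma: E z z * δ (E z z) * E z z = 0
  have key : E z z * δ (E z z) * E z z = 0 := by
    set P := E z z with hP
    set D := δ (E z z) with hD
    have hPP : P * P = P := hmul_same z z z
    have h1 : D = D * P + P * D := by
      have := hδ (E z z) (E z z)
      rwa [hmul_same z z z] at this
    have h2 : P * D * P = P * D * P + P * D * P := by
      calc P * D * P = P * (D * P + P * D) * P := by rw [← h1]
        _ = P * D * (P * P) + (P * P) * D * P := by noncomm_ring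
        _ = P * D * P + P * D * P := by rw [hPP]
    have h3 : P * D * P + 0 = P * D * P + P * D * P := by rw [add_zero]; exact h2
    exact (add_left_cancel h3).symm
  -- relation: δ (E z j) * E k z + E z j * δ (E k z) = if j = k then δ (E z z) else 0
  have rel : ∀ j k : Fin n, δ (E z j) * E k z + E z j * δ (E k z)
      = if j = k then δ (E z z) else 0 := by
    intro j k
    by_cases hjk : j = k
    · subst hjk
      rw [if_pos rfl, ← hδ, hmul_same z j z]
    · rw [if_neg hjk, ← hδ, hmul_ne z z hjk, map_zero]
  -- the main statement on basis matrices
  have basis : ∀ i j : Fin n, δ (E i j) = X * E i j - E i j * X := by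
    intro i j
    have hXE : X * E i j = δ (E i z) * E z j := by
      rw [hX, Finset.sum_mul]
      rw [Finset.sum_eq_single i]
      · rw [mul_assoc, hmul_same z i j]
      · intro k _ hki
        rw [mul_assoc, hmul_ne z j hki, mul_zero]
      · intro h; exact absurd (Finset.mem_univ i) h
    have hEX : E i j * X = - (E i z * δ (E z j)) := by
      rw [hX, Finset.mul_sum]
      have term : ∀ k : Fin n, E i j * (δ (E k z) * E z k)
          = (if j = k then E i z * δ (E z z) * E z k else 0)
            - E i z * δ (E z j) * (E k z * E z k) := by
        intro k
        have hij : E i j = E i z * E z j := (hmul_same i z j).symm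
        have hk : E z j * δ (E k z) = (if j = k then δ (E z z) else 0) - δ (E z j) * E k z := by
          rw [eq_sub_iff_add_eq, add_comm, rel j k]
        calc E i j * (δ (E k z) * E z k)
            = E i z * (E z j * δ (E k z)) * E z k := by
              rw [hij]; noncomm_ring
          _ = E i z * ((if j = k then δ (E z z) else 0) - δ (E z j) * E k z) * E z k := by
              rw [hk]
          _ = (if j = k then E i z * δ (E z z) * E z k else 0)
                - E i z * δ (E z j) * (E k z * E z k) := by
              rw [mul_sub, sub_mul]
              congr 1
              · by_cases hjk : j = k
                · simp only [if_pos hjk, mul_assoc]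
                · simp only [if_neg hjk, mul_zero, zero_mul]
              · noncomm_ring
      rw [Finset.sum_congr rfl (fun k _ => term k), Finset.sum_sub_distrib]
      have s1 : ∑ k, (if j = k then E i z * δ (E z z) * E z k else 0)
          = E i z * δ (E z z) * E z j := by
        rw [Finset.sum_ite_eq (Finset.univ) j (fun k => E i z * δ (E z z) * E z k)]
        simp
      have s2 : ∑ k, E i z * δ (E z j) * (E k z * E z k)
          = E i z * δ (E z j) := by
        have hkk : ∀ k : Fin n, E k z * E z k = E k k := fun k => hmul_same k z k
        simp_rw [hkk]
        rw [← Finset.mul_sum, ← hone, mul_one]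
      rw [s1, s2]
      have hvanish : E i z * δ (E z z) * E z j = 0 := by
        have heq : E i z * δ (E z z) * E z j
            = E i z * (E z z * δ (E z z) * E z z) * E z j := by
          have h1 : E i z = E i z * E z z := (hmul_same i z z).symm
          have h2 : E z j = E z z * E z j := (hmul_same z z j).symm
          conv_lhs => rw [h1, h2]
          noncomm_ring
        rw [heq, key, mul_zero, zero_mul]
      rw [hvanish, zero_sub]
    have hδij : δ (E i j) = δ (E i z) * E z j + E i z * δ (E z j) := by
      have := hδ (E i z) (E z j)
      rwa [hmul_same i z j] at this
    rw [hδij, hXE, hEX, sub_neg_eq_add]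
  -- extend by linearity
  intro M
  have hM' : M = ∑ i, ∑ j, M i j • E i j := by
    conv_lhs => rw [matrix_eq_sum_single M]
    refine Finset.sum_congr rfl fun i _ => Finset.sum_congr rfl fun j _ => ?_
    rw [hE, smul_single, smul_eq_mul, mul_one]
  have h1 : X * M = ∑ i, ∑ j, M i j • (X * E i j) := by
    conv_lhs => rw [hM']
    simp only [Finset.mul_sum, mul_smul_comm]
  have h2 : M * X = ∑ i, ∑ j, M i j • (E i j * X) := by
    conv_lhs => rw [hM']
    simp only [Finset.sum_mul, smul_mul_assoc]
  have h3 : δ M = ∑ i, ∑ j, M i j • δ (E i j) := by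
    conv_lhs => rw [hM']
    simp only [map_sum, LinearMap.map_smul]
  rw [h3, h1, h2, ← Finset.sum_sub_distrib]
  refine Finset.sum_congr rfl fun i _ => ?_
  rw [← Finset.sum_sub_distrib]
  refine Finset.sum_congr rfl fun j _ => ?_
  rw [← smul_sub, basis i j]
end

section
/- Let k be a commutative ring, F a field that is a k-algebra, and n a positive integer. Let δ be a k-linear derivation of the matrix algebra M_n(F) and δ₀ a k-linear derivation of F such that δ(f·I) = δ₀(f)·I for all f ∈ F, where I is the identity matrix. Then the matrix trace commutes with δ: trace(δ(M)) = δ₀(trace(M)) for all M ∈ M_n(F). -/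
open Matrix

/-- Trace of a derivation applied to an idempotent matrix is zero. -/
lemma trace_deriv_idem {k F : Type*} [CommRing k] [Field F] [Algebra k F] {n : ℕ}
    (δ : Matrix (Fin n) (Fin n) F →ₗ[k] Matrix (Fin n) (Fin n) F)
    (hδ : ∀ M N : Matrix (Fin n) (Fin n) F, δ (M * N) = δ M * N + M * δ N)
    (E : Matrix (Fin n) (Fin n) F) (hE : E * E = E) :
    Matrix.trace (δ E) = 0 := by
  have h1 : δ E = δ E * E + E * δ E := by conv_lhs => rw [← hE, hδ]
  have h2 : E * δ E * E = 0 := by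
    have h := congrArg (fun X => E * X * E) h1
    simp only [mul_add, add_mul] at h
    have e1 : E * (δ E * E) * E = E * δ E * E := by
      rw [← mul_assoc, mul_assoc (E * δ E) E E, hE]
    have e2 : E * (E * δ E) * E = E * δ E * E := by
      rw [← mul_assoc, hE]
    rw [e1, e2] at h
    exact (left_eq_add.mp h)
  have h3 : Matrix.trace (E * δ E) = 0 := by
    calc Matrix.trace (E * δ E) = Matrix.trace ((E * E) * δ E) := by rw [hE]
      _ = Matrix.trace (E * δ E * E) := by
          rw [mul_assoc, Matrix.trace_mul_comm]
      _ = 0 := by rw [h2, Matrix.trace_zero]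
  calc Matrix.trace (δ E) = Matrix.trace (δ E * E + E * δ E) := by rw [← h1]
    _ = Matrix.trace (E * δ E) + Matrix.trace (E * δ E) := by
        rw [Matrix.trace_add, Matrix.trace_mul_comm]
    _ = 0 := by rw [h3, add_zero]

/-- Trace of a derivation applied to a standard basis matrix is zero. -/
lemma trace_deriv_stdBasis {k F : Type*} [CommRing k] [Field F] [Algebra k F] {n : ℕ}
    (δ : Matrix (Fin n) (Fin n) F →ₗ[k] Matrix (Fin n) (Fin n) F)
    (hδ : ∀ M N : Matrix (Fin n) (Fin n) F, δ (M * N) = δ M * N + M * δ N)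
    (i j : Fin n) :
    Matrix.trace (δ (Matrix.single i j (1 : F))) = 0 := by
  rcases eq_or_ne i j with rfl | hij
  · exact trace_deriv_idem δ hδ _ (by
      rw [Matrix.single_mul_single_same, one_mul])
  · have hdiag : Matrix.trace (δ (Matrix.single i i (1 : F))) = 0 :=
      trace_deriv_idem δ hδ _ (by rw [Matrix.single_mul_single_same, one_mul])
    have hsum : Matrix.trace (δ (Matrix.single i i (1 : F)
        + Matrix.single i j (1 : F))) = 0 := by
      apply trace_deriv_idem δ hδ
      rw [add_mul, mul_add, mul_add, Matrix.single_mul_single_same,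
        Matrix.single_mul_single_same,
        Matrix.single_mul_single_of_ne (c := (1 : F)) i j i hij.symm 1,
        Matrix.single_mul_single_of_ne (c := (1 : F)) i j i hij.symm 1, add_zero, add_zero, one_mul]
    rw [map_add, Matrix.trace_add, hdiag, zero_add] at hsum
    exact hsum

/-- If `δ` is a `k`-linear derivation of the matrix algebra `Mₙ(F)` and `δ₀` a `k`-linear
derivation of `F` with `δ(f·I) = δ₀(f)·I` for all `f ∈ F`, then the matrix trace
commutes with `δ`: `trace(δ(M)) = δ₀(trace(M))`. -/
theorem matrixTrace_comm_derivation {k F : Type*} [CommRing k] [Field F] [Algebra k F]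
    (n : ℕ) (hn : 0 < n)
    (δ : Matrix (Fin n) (Fin n) F →ₗ[k] Matrix (Fin n) (Fin n) F)
    (hδ : ∀ M N : Matrix (Fin n) (Fin n) F, δ (M * N) = δ M * N + M * δ N)
    (δ₀ : F →ₗ[k] F) (hδ₀ : ∀ x y : F, δ₀ (x * y) = δ₀ x * y + x * δ₀ y)
    (hcompat : ∀ f : F, δ (algebraMap F (Matrix (Fin n) (Fin n) F) f)
      = algebraMap F (Matrix (Fin n) (Fin n) F) (δ₀ f))
    (M : Matrix (Fin n) (Fin n) F) :
    Matrix.trace (δ M) = δ₀ (Matrix.trace M) := by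
  have hstd : ∀ (i j : Fin n) (f : F),
      Matrix.single i j f
        = algebraMap F (Matrix (Fin n) (Fin n) F) f * Matrix.single i j (1 : F) := by
    intro i j f
    rw [Algebra.algebraMap_eq_smul_one, smul_mul_assoc, one_mul,
      Matrix.smul_single, smul_eq_mul, mul_one]
  have key : ∀ (i j : Fin n) (f : F),
      Matrix.trace (δ (Matrix.single i j f))
        = if i = j then δ₀ f else 0 := by
    intro i j f
    rw [hstd, hδ, hcompat, ← hstd]
    rw [Matrix.trace_add]
    have h2 : Matrix.trace (algebraMap F (Matrix (Fin n) (Fin n) F) f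
        * δ (Matrix.single i j (1 : F))) = 0 := by
      rw [Algebra.algebraMap_eq_smul_one, smul_mul_assoc, one_mul,
        Matrix.trace_smul, trace_deriv_stdBasis δ hδ i j, smul_zero]
    rw [h2, add_zero]
    rcases eq_or_ne i j with rfl | hij
    · simp
    · simp [hij, Matrix.trace_single_eq_of_ne _ _ _ hij]
  conv_lhs => rw [Matrix.matrix_eq_sum_single M]
  rw [map_sum, Matrix.trace_sum]
  simp_rw [map_sum, Matrix.trace_sum, key]
  rw [Matrix.trace]
  rw [map_sum]
  simp [Matrix.diag]
end
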